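/- arXiv:1404.1480 — 6 statements merged into one kernel-verified Lean document; each statement's English description precedes it below -/
import Mathlib

section
/- Let X be a nonnegative random variable with a regularly varying tail with index α > 0 and let s > α. Then lim_{x→∞} E[X^s · 1{X ≤ x}] / (x^s · P(X > x)) = α/(s − α). -/
/-!
Write `G y = P(X > y)`. Splitting `X^s 1{X ≤ x}` off `min(X, x)^s` and applying the layer-cake
formula to the latter gives `E[X^s 1{X ≤ x}] = s ∫₀ˣ t^(s-1) G t dt - x^s G x`, so the claim is
Karamata's theorem `∫₀ˣ t^(s-1) G t dt ~ x^s G x / (s - α)`. After substituting `t = v x` this says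
`∫₀¹ v^(s-1) G (v x) / G x dv → ∫₀¹ v^(s-1-α) dv`, which is dominated convergence once
Potter's bound `G (v x) ≤ C v^(-β) G x` (`α < β < s`, `0 < v ≤ 1`, `x` large) is known. That
bound comes from iterating `G (y / 2) ≤ 2^β G y`, which regular variation gives for large `y`.
-/

open MeasureTheory Filter Set Topology

def IsRegularlyVarying (G : ℝ → ℝ) (ρ : ℝ) : Prop :=
  ∀ t : ℝ, 0 < t → Tendsto (fun x => G (t * x) / G x) atTop (𝓝 (t ^ ρ))

section RegularVariation

variable {G : ℝ → ℝ} {α β s : ℝ}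

theorem Antitone.apply_mul_le_of_apply_half_le (hanti : Antitone G)
    (hGpos : ∀ y, 0 < y → 0 < G y) (hβ : 0 ≤ β) {x₀ : ℝ} (hx₀ : 0 < x₀)
    (hhalf : ∀ y, x₀ ≤ y → G (y / 2) ≤ 2 ^ β * G y) {v x : ℝ} (hv : v ∈ Ioc 0 1)
    (hvx : x₀ ≤ v * x) : G (v * x) ≤ 2 ^ β * v ^ (-β) * G x := by
  obtain ⟨k, hk⟩ := pow_unbounded_of_one_lt v⁻¹ one_lt_two
  induction k generalizing v x with
  | zero =>
    rw [pow_zero] at hk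
    linarith [(one_le_inv₀ hv.1).mpr hv.2]
  | succ k ih =>
    obtain ⟨hv0, hv1⟩ := hv
    have hx : 0 < x := pos_of_mul_pos_right (hx₀.trans_le hvx) hv0.le
    rcases le_or_gt (1 / 2) v with hv2 | hv2
    · calc G (v * x) ≤ G (x / 2) := hanti (by nlinarith)
        _ ≤ 2 ^ β * G x := hhalf x (hvx.trans (by nlinarith))
        _ ≤ 2 ^ β * v ^ (-β) * G x := by
          have hv' : 1 ≤ v ^ (-β) :=
            Real.one_le_rpow_of_pos_of_le_one_of_nonpos hv0 hv1 (by linarith)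
          gcongr
          · exact (hGpos x hx).le
          · exact le_mul_of_one_le_right (by positivity) hv'
    · have hrec := ih (v := 2 * v) (x := x / 2) ⟨by positivity, by linarith⟩ (by linarith)
        (by rw [pow_succ] at hk; rw [mul_inv]; linarith)
      calc G (v * x) = G (2 * v * (x / 2)) := by ring_nf
        _ ≤ 2 ^ β * (2 * v) ^ (-β) * G (x / 2) := hrec
        _ ≤ 2 ^ β * (2 * v) ^ (-β) * (2 ^ β * G x) := by
          gcongr; exact hhalf x (hvx.trans (by nlinarith))
        _ = 2 ^ β * v ^ (-β) * G x := by
          rw [Real.mul_rpow (by norm_num) hv0.le, Real.rpow_neg (by norm_num : (0:ℝ) ≤ 2)]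
          field_simp

namespace IsRegularlyVarying

theorem eventually_apply_half_le (hG : IsRegularlyVarying G (-α))
    (hGpos : ∀ y, 0 < y → 0 < G y) (hαβ : α < β) :
    ∀ᶠ x in atTop, G (x / 2) ≤ 2 ^ β * G x := by
  have hlim : (2⁻¹ : ℝ) ^ (-α) < 2 ^ β := by
    rw [Real.inv_rpow zero_le_two, ← Real.rpow_neg zero_le_two, neg_neg]
    exact Real.rpow_lt_rpow_of_exponent_lt one_lt_two hαβ
  filter_upwards [(hG 2⁻¹ (by norm_num)).eventually_lt_const hlim, eventually_gt_atTop 0]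
    with x hx hx0
  rw [div_lt_iff₀ (hGpos x hx0), inv_mul_eq_div] at hx
  exact hx.le

theorem exists_potter_bound (hG : IsRegularlyVarying G (-α)) (hanti : Antitone G)
    (hGpos : ∀ y, 0 < y → 0 < G y) (hαβ : α < β) (hβ : 0 ≤ β) :
    ∃ C x₀, 0 < x₀ ∧ ∀ x, x₀ ≤ x → ∀ v ∈ Ioc (0 : ℝ) 1, G (v * x) ≤ C * v ^ (-β) * G x := by
  obtain ⟨x₁, hx₁⟩ := eventually_atTop.mp (hG.eventually_apply_half_le hGpos hαβ)
  set x₀ := max x₁ 1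
  have hx₀ : 0 < x₀ := zero_lt_one.trans_le (le_max_right _ _)
  have hGx₀ := hGpos x₀ hx₀
  have hpotter {v x : ℝ} : v ∈ Ioc 0 1 → x₀ ≤ v * x → G (v * x) ≤ 2 ^ β * v ^ (-β) * G x :=
    hanti.apply_mul_le_of_apply_half_le hGpos hβ hx₀ fun y hy => hx₁ y (le_of_max_le_left hy)
  refine ⟨2 ^ β * (G 0 / G x₀), x₀, hx₀, fun x hx v hv => ?_⟩
  have hx0 : 0 < x := hx₀.trans_le hx
  have hGx : 0 < G x := hGpos x hx0
  have hG0 : 1 ≤ G 0 / G x₀ := (one_le_div hGx₀).mpr (hanti hx₀.le)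
  rcases le_or_gt x₀ (v * x) with hvx | hvx
  · calc G (v * x) ≤ 2 ^ β * v ^ (-β) * G x := hpotter hv hvx
      _ ≤ 2 ^ β * (G 0 / G x₀) * v ^ (-β) * G x := by
        have h2β : (2 : ℝ) ^ β ≤ 2 ^ β * (G 0 / G x₀) := le_mul_of_one_le_right (by positivity) hG0
        have hv0 := hv.1
        gcongr
  · -- below the range of the iterated bound, compare with `G 0` and with the bound at `w * x = x₀`
    have hw : x₀ / x ∈ Ioc 0 1 := ⟨by positivity, (div_le_one hx0).mpr hx⟩
    have hvw : v ≤ x₀ / x := (le_div_iff₀ hx0).mpr hvx.le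
    have hGw : G x₀ ≤ 2 ^ β * (x₀ / x) ^ (-β) * G x := by
      simpa [div_mul_cancel₀ _ hx0.ne'] using hpotter hw (div_mul_cancel₀ _ hx0.ne').ge
    have hwv : (x₀ / x) ^ (-β) ≤ v ^ (-β) := Real.rpow_le_rpow_of_nonpos hv.1 hvw (by linarith)
    calc G (v * x) ≤ G 0 := hanti (mul_pos hv.1 hx0).le
      _ = G 0 / G x₀ * G x₀ := by field_simp
      _ ≤ G 0 / G x₀ * (2 ^ β * v ^ (-β) * G x) := by
        gcongr
        exact hGw.trans (by gcongr)
      _ = 2 ^ β * (G 0 / G x₀) * v ^ (-β) * G x := by ring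

theorem tendsto_intervalIntegral_rpow_mul_div (hG : IsRegularlyVarying G (-α))
    (hanti : Antitone G) (hGpos : ∀ y, 0 < y → 0 < G y) (hα : 0 ≤ α) (hs : α < s) :
    Tendsto (fun x => ∫ v in (0 : ℝ)..1, v ^ (s - 1) * (G (v * x) / G x)) atTop
      (𝓝 (1 / (s - α))) := by
  obtain ⟨β, hαβ, hβs⟩ := exists_between hs
  obtain ⟨C, x₀, hx₀, hC⟩ := hG.exists_potter_bound hanti hGpos hαβ (hα.trans hαβ.le)
  have hlim : ∫ v in (0 : ℝ)..1, v ^ (s - 1 - α) = 1 / (s - α) := by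
    rw [integral_rpow (Or.inl (by linarith)), Real.zero_rpow (by linarith), Real.one_rpow]
    ring_nf
  rw [← hlim]
  refine intervalIntegral.tendsto_integral_filter_of_dominated_convergence
    (fun v => C * v ^ (s - 1 - β)) ?_ ?_ ?_ ?_
  · exact .of_forall fun x => by
      have := hanti.measurable
      fun_prop
  · filter_upwards [eventually_ge_atTop x₀] with x hx
    refine ae_of_all _ fun v hv => ?_
    rw [uIoc_of_le zero_le_one] at hv
    have hx0 : 0 < x := hx₀.trans_le hx
    have hGx := hGpos x hx0
    have hvs := Real.rpow_nonneg hv.1.le (s - 1)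
    rw [Real.norm_of_nonneg (by have := hGpos (v * x) (mul_pos hv.1 hx0); positivity)]
    calc v ^ (s - 1) * (G (v * x) / G x) ≤ v ^ (s - 1) * (C * v ^ (-β)) := by
          gcongr
          rw [div_le_iff₀ hGx]
          exact hC x hx v hv
      _ = C * v ^ (s - 1 - β) := by
          rw [sub_eq_add_neg (s - 1), Real.rpow_add hv.1]
          ring
  · exact (intervalIntegral.intervalIntegrable_rpow' (by linarith)).const_mul C
  · refine ae_of_all _ fun v hv => ?_
    rw [uIoc_of_le zero_le_one] at hv
    rw [sub_eq_add_neg (s - 1) α, Real.rpow_add hv.1]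
    exact (hG v hv.1).const_mul _

theorem tendsto_intervalIntegral_rpow_mul_div_rpow_mul (hG : IsRegularlyVarying G (-α))
    (hanti : Antitone G) (hGpos : ∀ y, 0 < y → 0 < G y) (hα : 0 ≤ α) (hs : α < s) :
    Tendsto (fun x => (∫ t in (0 : ℝ)..x, t ^ (s - 1) * G t) / (x ^ s * G x)) atTop
      (𝓝 (1 / (s - α))) := by
  refine (hG.tendsto_intervalIntegral_rpow_mul_div hanti hGpos hα hs).congr' ?_
  filter_upwards [eventually_gt_atTop 0] with x hx
  have hGx := hGpos x hx
  have hscale : ∀ v ∈ uIcc (0 : ℝ) 1,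
      v ^ (s - 1) * (G (v * x) / G x) = (v * x) ^ (s - 1) * G (v * x) / (x ^ (s - 1) * G x) := by
    intro v hv
    rw [uIcc_of_le zero_le_one] at hv
    rw [Real.mul_rpow hv.1 hx.le]
    field_simp
  rw [intervalIntegral.integral_congr hscale, intervalIntegral.integral_div,
    intervalIntegral.integral_comp_mul_right (fun t => t ^ (s - 1) * G t) hx.ne',
    Real.rpow_sub_one hx.ne']
  simp only [zero_mul, one_mul, smul_eq_mul]
  field_simp

end IsRegularlyVarying

end RegularVariation

namespace MeasureTheory

variable {Ω : Type*} [MeasurableSpace Ω] {μ : Measure Ω} [IsFiniteMeasure μ]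

theorem integral_rpow_eq_intervalIntegral_rpow_mul_measureReal_lt {f : Ω → ℝ}
    (hf : Measurable f) (hf0 : ∀ ω, 0 ≤ f ω) {M : ℝ} (hM : 0 ≤ M) (hfM : ∀ ω, f ω ≤ M) {p : ℝ}
    (hp : 0 < p) :
    ∫ ω, f ω ^ p ∂μ = p * ∫ t in (0 : ℝ)..M, t ^ (p - 1) * μ.real {ω | t < f ω} := by
  have htail_meas : Measurable fun t : ℝ => μ.real {ω | t < f ω} :=
    Antitone.measurable fun a b hab => measureReal_mono fun ω hω => hab.trans_lt hω
  have hint : IntegrableOn (fun t : ℝ => t ^ (p - 1) * μ.real {ω | t < f ω}) (Ioc 0 M) := by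
    have hpow : IntegrableOn (fun t : ℝ => t ^ (p - 1)) (Ioc 0 M) :=
      (intervalIntegrable_iff_integrableOn_Ioc_of_le hM).mp
        (intervalIntegral.intervalIntegrable_rpow' (by linarith))
    refine (hpow.mul_const (μ.real univ)).mono' (by fun_prop) ?_
    filter_upwards [ae_restrict_mem measurableSet_Ioc] with t ht
    have := Real.rpow_nonneg ht.1.le (p - 1)
    rw [Real.norm_of_nonneg (by positivity)]
    exact mul_le_mul_of_nonneg_left (measureReal_mono (subset_univ _)) this
  have hempty : ∀ t, M < t → {ω | t < f ω} = ∅ := fun t ht =>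
    eq_empty_of_forall_notMem fun ω hω => (hfM ω).not_gt (ht.trans hω)
  have hlayer : ∫⁻ t in Ioi 0, μ {ω | t < f ω} * ENNReal.ofReal (t ^ (p - 1))
      = ENNReal.ofReal (∫ t in Ioc 0 M, t ^ (p - 1) * μ.real {ω | t < f ω}) := by
    rw [← Ioc_union_Ioi_eq_Ioi hM, lintegral_union measurableSet_Ioi Ioc_disjoint_Ioi_same,
      setLIntegral_congr_fun measurableSet_Ioi (g := fun _ => 0)
        fun t ht => by simp [hempty t ht],
      lintegral_zero, add_zero, ofReal_integral_eq_lintegral_ofReal hint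
        (ae_restrict_of_forall_mem measurableSet_Ioc fun t ht => by
          have := Real.rpow_nonneg ht.1.le (p - 1); positivity)]
    refine setLIntegral_congr_fun measurableSet_Ioc fun t ht => ?_
    rw [ENNReal.ofReal_mul (Real.rpow_nonneg ht.1.le _), mul_comm, measureReal_def,
      ENNReal.ofReal_toReal (measure_ne_top _ _)]
  rw [integral_eq_lintegral_of_nonneg_ae (.of_forall fun ω => Real.rpow_nonneg (hf0 ω) p)
      (hf.pow_const p).aestronglyMeasurable,
    lintegral_rpow_eq_lintegral_meas_lt_mul μ (.of_forall hf0) hf.aemeasurable hp, hlayer,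
    ENNReal.toReal_mul, ENNReal.toReal_ofReal hp.le,
    ENNReal.toReal_ofReal (setIntegral_nonneg measurableSet_Ioc fun t ht => by
      have := Real.rpow_nonneg ht.1.le (p - 1); positivity),
    intervalIntegral.integral_of_le hM]

theorem integral_ite_le_rpow {X : Ω → ℝ} (hX : Measurable X) (hX0 : ∀ ω, 0 ≤ X ω) {s x : ℝ}
    (hs : 0 < s) (hx : 0 ≤ x) :
    ∫ ω, (if X ω ≤ x then X ω ^ s else 0) ∂μ
      = s * (∫ t in (0 : ℝ)..x, t ^ (s - 1) * μ.real {ω | X ω > t})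
        - x ^ s * μ.real {ω | X ω > x} := by
  have hmin : ∫ ω, min (X ω) x ^ s ∂μ
      = s * ∫ t in (0 : ℝ)..x, t ^ (s - 1) * μ.real {ω | X ω > t} := by
    rw [integral_rpow_eq_intervalIntegral_rpow_mul_measureReal_lt (hX.min measurable_const)
      (fun ω => le_min (hX0 ω) hx) hx (fun ω => min_le_right _ _) hs,
      intervalIntegral.integral_of_le hx, intervalIntegral.integral_of_le hx,
      integral_Ioc_eq_integral_Ioo, integral_Ioc_eq_integral_Ioo]
    congr 1
    refine setIntegral_congr_fun measurableSet_Ioo fun t ht => ?_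
    simp only [lt_min_iff, ht.2, and_true, gt_iff_lt]
  have hsplit : (fun ω => min (X ω) x ^ s) = fun ω =>
      (if X ω ≤ x then X ω ^ s else 0) + {ω | X ω > x}.indicator (fun _ => x ^ s) ω := by
    ext ω
    by_cases h : X ω ≤ x
    · simp [h, h.not_gt]
    · simp [h, min_eq_right (not_le.mp h).le, not_le.mp h]
  have hint : Integrable (fun ω => if X ω ≤ x then X ω ^ s else 0) μ := by
    refine (integrable_const (x ^ s)).mono' (Measurable.ite (measurableSet_le hX measurable_const)
      (hX.pow_const s) measurable_const).aestronglyMeasurable (.of_forall fun ω => ?_)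
    by_cases h : X ω ≤ x
    · simpa [h, abs_of_nonneg (Real.rpow_nonneg (hX0 ω) s)] using
        Real.rpow_le_rpow (hX0 ω) h hs.le
    · simpa [h] using Real.rpow_nonneg hx s
  have htail : MeasurableSet {ω | X ω > x} := measurableSet_lt measurable_const hX
  rw [hsplit, integral_add hint ((integrable_const _).indicator htail),
    integral_indicator_const _ htail, smul_eq_mul] at hmin
  linarith

end MeasureTheory

/-- **Karamata-type theorem for truncated moments.**
Let `X` be a nonnegative random variable with a regularly varying tail with index `α > 0`
and let `s > α`. Then `E[X^s 1{X ≤ x}] / (x^s P(X > x)) → α/(s-α)` as `x → ∞`. -/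
theorem truncated_moment_karamata
    {Ω : Type*} [MeasurableSpace Ω] (P : Measure Ω) [IsProbabilityMeasure P]
    (X : Ω → ℝ) (hXmeas : Measurable X) (hXnonneg : ∀ ω, 0 ≤ X ω)
    (α : ℝ) (hα : 0 < α)
    (htailpos : ∀ x : ℝ, 0 < x → 0 < P {ω | X ω > x})
    (hrv : ∀ t : ℝ, 0 < t →
      Tendsto (fun x : ℝ => (P {ω | X ω > t * x}).toReal / (P {ω | X ω > x}).toReal)
        atTop (nhds (t ^ (-α))))
    (s : ℝ) (hs : α < s) :
    Tendsto
      (fun x : ℝ =>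
        (∫ ω, (if X ω ≤ x then X ω ^ s else 0) ∂P) / (x ^ s * (P {ω | X ω > x}).toReal))
      atTop (nhds (α / (s - α))) := by
  set G : ℝ → ℝ := fun y => P.real {ω | X ω > y}
  have hanti : Antitone G := fun a b hab => measureReal_mono fun ω hω => hab.trans_lt hω
  have hGpos (y : ℝ) (hy : 0 < y) : 0 < G y :=
    ENNReal.toReal_pos (htailpos y hy).ne' (measure_ne_top _ _)
  have hkaramata := IsRegularlyVarying.tendsto_intervalIntegral_rpow_mul_div_rpow_mul
    (G := G) hrv hanti hGpos hα.le hs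
  have hlim : s * (1 / (s - α)) - 1 = α / (s - α) := by
    field_simp [(sub_pos.mpr hs).ne']
    ring
  rw [← hlim]
  refine ((hkaramata.const_mul s).sub_const 1).congr' ?_
  filter_upwards [eventually_gt_atTop 0] with x hx
  have hmoment : ∫ ω, (if X ω ≤ x then X ω ^ s else 0) ∂P
      = s * (∫ t in (0 : ℝ)..x, t ^ (s - 1) * G t) - x ^ s * G x :=
    integral_ite_le_rpow hXmeas hXnonneg (hα.trans hs) hx.le
  change _ = (∫ ω, (if X ω ≤ x then X ω ^ s else 0) ∂P) / (x ^ s * G x)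
  have hGx := hGpos x hx
  have hxs := Real.rpow_pos_of_pos hx s
  rw [hmoment]
  field_simp
end

section
/- Let (X_n)_{n≥1} be identically distributed nonnegative random variables such that X_1 has a regularly varying tail with index α > 0, and let (a_n) be a sequence of positive reals with n·P(X_1 > a_n) → 1. Then for every s > α, every ε > 0 and every δ > 0, limsup_{n→∞} P(a_n^{-1}·max_{1≤i≤n} X_i · 1{X_i < ε a_n} > δ) ≤ δ^{−s} · (α/(s−α)) · ε^{s−α}. -/
open MeasureTheory Filter Set Topology

/-! If `max_{i ≤ n} X_i 1{X_i < ε a_n} > δ a_n`, some `X_i` with `i ≤ n` lies in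
`(δ a_n, ε a_n)`; a union bound over identically distributed variables bounds the probability
of this by `n P(X_1 > δ a_n) - n P(X_1 > ε a_n)`, which by regular variation tends to
`δ^{-α} - ε^{-α}`. Bernoulli's inequality for the exponent `s / α`
bounds this by `δ^{-s} (α / (s - α)) ε^{s - α}`. -/

lemma sub_one_le_rpow_div_sub_one {w p : ℝ} (hw : 0 ≤ w) (hp : 1 < p) :
    w - 1 ≤ w ^ p / (p - 1) := by
  have bernoulli := one_add_mul_self_le_rpow_one_add (s := w - 1) (by linarith) hp.le
  rw [add_sub_cancel] at bernoulli
  rw [le_div_iff₀ (by linarith)]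
  nlinarith

lemma rpow_neg_sub_rpow_neg_le {α s δ ε : ℝ} (hα : 0 < α) (hs : α < s) (hδ : 0 < δ)
    (hε : 0 < ε) : δ ^ (-α) - ε ^ (-α) ≤ δ ^ (-s) * (α / (s - α)) * ε ^ (s - α) := by
  have key := sub_one_le_rpow_div_sub_one (w := (δ / ε) ^ (-α)) (by positivity)
    ((one_lt_div hα).2 hs)
  rw [← Real.rpow_mul (by positivity), show -α * (s / α) = -s by field_simp,
    Real.div_rpow hδ.le hε.le, Real.div_rpow hδ.le hε.le] at key
  calc δ ^ (-α) - ε ^ (-α) = ε ^ (-α) * (δ ^ (-α) / ε ^ (-α) - 1) := by field_simp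
    _ ≤ ε ^ (-α) * (δ ^ (-s) / ε ^ (-s) / (s / α - 1)) := by gcongr
    _ = δ ^ (-s) * (α / (s - α)) * ε ^ (s - α) := by
      rw [Real.rpow_sub hε, Real.rpow_neg hε.le, Real.rpow_neg hε.le]
      have : s - α ≠ 0 := by linarith
      field_simp

lemma tendsto_atTop_of_tendsto_natCast_mul {F : ℝ → ℝ} (hF : Antitone F)
    (hpos : ∀ x, 0 < x → 0 < F x) {a : ℕ → ℝ}
    (ha : Tendsto (fun n : ℕ => (n : ℝ) * F (a n)) atTop (𝓝 1)) : Tendsto a atTop atTop := by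
  rw [tendsto_atTop]
  intro b
  have hM : Tendsto (fun n : ℕ => (n : ℝ) * F (max b 1)) atTop atTop :=
    tendsto_natCast_atTop_atTop.atTop_mul_const (hpos _ (by positivity))
  filter_upwards [hM.eventually_gt_atTop 2, ha.eventually_lt_const one_lt_two] with n hM hn
  have : F (a n) < F (max b 1) := lt_of_mul_lt_mul_left (hn.trans hM) n.cast_nonneg
  exact (le_max_left b 1).trans (hF.reflect_lt this).le

lemma tendsto_natCast_mul_comp_const_mul {F : ℝ → ℝ} {a : ℕ → ℝ} {c L : ℝ}
    (hF : Tendsto (fun x => F (c * x) / F x) atTop (𝓝 L)) (ha_top : Tendsto a atTop atTop)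
    (ha : Tendsto (fun n : ℕ => (n : ℝ) * F (a n)) atTop (𝓝 1)) :
    Tendsto (fun n : ℕ => (n : ℝ) * F (c * a n)) atTop (𝓝 L) := by
  have h := ha.mul (hF.comp ha_top)
  rw [one_mul] at h
  refine h.congr' ?_
  filter_upwards [ha.eventually_ne one_ne_zero] with n hn
  have : F (a n) ≠ 0 := right_ne_zero_of_mul hn
  simp only [Function.comp_apply]
  field_simp

lemma exists_mem_Ioo_of_lt_fold_max_ite {ι : Type*} {s : Finset ι} {x : ι → ℝ} {b c : ℝ}
    (hb : 0 ≤ b) (h : b < s.fold max 0 (fun i => if x i < c then x i else 0)) :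
    ∃ i ∈ s, x i ∈ Ioo b c := by
  obtain h | ⟨i, hi, h⟩ := (Finset.lt_fold_max b).1 h
  · linarith
  split_ifs at h with hc
  · exact ⟨i, hi, h, hc⟩
  · linarith

section Measure

variable {Ω ι : Type*} [MeasurableSpace Ω] {μ : Measure Ω} {s : Finset ι}

lemma measure_biUnion_preimage_le_card_mul {β : Type*} [MeasurableSpace β] {Y : ι → Ω → β}
    {Z : Ω → β} (hY : ∀ i ∈ s, AEMeasurable (Y i) μ)
    (hZ : AEMeasurable Z μ) (hid : ∀ i ∈ s, μ.map (Y i) = μ.map Z) {B : Set β}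
    (hB : MeasurableSet B) : μ (⋃ i ∈ s, Y i ⁻¹' B) ≤ s.card * μ (Z ⁻¹' B) :=
  calc μ (⋃ i ∈ s, Y i ⁻¹' B) ≤ ∑ i ∈ s, μ (Y i ⁻¹' B) := measure_biUnion_finset_le _ _
    _ = ∑ _i ∈ s, μ (Z ⁻¹' B) := Finset.sum_congr rfl fun i hi => by
      rw [← Measure.map_apply_of_aemeasurable (hY i hi) hB, hid i hi,
        Measure.map_apply_of_aemeasurable hZ hB]
    _ = s.card * μ (Z ⁻¹' B) := by rw [Finset.sum_const, nsmul_eq_mul]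

lemma measure_lt_fold_max_ite_le {Y : ι → Ω → ℝ} {Z : Ω → ℝ}
    (hY : ∀ i ∈ s, AEMeasurable (Y i) μ)
    (hZ : AEMeasurable Z μ) (hid : ∀ i ∈ s, μ.map (Y i) = μ.map Z) {b c : ℝ} (hb : 0 ≤ b) :
    μ {ω | b < s.fold max 0 (fun i => if Y i ω < c then Y i ω else 0)}
      ≤ s.card * μ (Z ⁻¹' Ioo b c) :=
  (measure_mono fun _ hω =>
    let ⟨_, hi, h⟩ := exists_mem_Ioo_of_lt_fold_max_ite hb hω; mem_biUnion hi h).trans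
    (measure_biUnion_preimage_le_card_mul hY hZ hid measurableSet_Ioo)

lemma measureReal_fold_max_ite_div_gt_le [IsFiniteMeasure μ] {X : ℕ → Ω → ℝ}
    (hX : ∀ i, Measurable (X i)) (hid : ∀ i, 1 ≤ i → μ.map (X i) = μ.map (X 1)) (n : ℕ)
    {a δ ε : ℝ} (ha : 0 < a) (hδ : 0 ≤ δ) :
    μ.real {ω | (Finset.Icc 1 n).fold max 0 (fun i => if X i ω < ε * a then X i ω else 0) / a > δ}
      ≤ n * μ.real (X 1 ⁻¹' Ioo (δ * a) (ε * a)) := by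
  have h := measure_lt_fold_max_ite_le (s := Finset.Icc 1 n) (fun i _ => (hX i).aemeasurable)
    (hX 1).aemeasurable (fun i hi => hid i (Finset.mem_Icc.1 hi).1) (c := ε * a)
    (mul_nonneg hδ ha.le)
  rw [Nat.card_Icc, add_tsub_cancel_right] at h
  simp_rw [gt_iff_lt, lt_div_iff₀ ha, measureReal_def, ← ENNReal.toReal_natCast,
    ← ENNReal.toReal_mul]
  exact ENNReal.toReal_mono (by finiteness) h

lemma measureReal_preimage_Ioo_le_sub [IsFiniteMeasure μ] {Z : Ω → ℝ} (hZ : Measurable Z)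
    {u v : ℝ} (huv : u ≤ v) :
    μ.real (Z ⁻¹' Ioo u v) ≤ μ.real {ω | Z ω > u} - μ.real {ω | Z ω > v} := by
  calc μ.real (Z ⁻¹' Ioo u v) ≤ μ.real ({ω | Z ω > u} \ {ω | Z ω > v}) :=
        measureReal_mono fun ω h => ⟨h.1, not_lt.2 h.2.le⟩
    _ = _ := measureReal_sdiff (fun ω (h : v < Z ω) => huv.trans_lt h) (hZ measurableSet_Ioi)

end Measure

theorem limsup_max_truncated_bound_general
    {Ω : Type*} [MeasurableSpace Ω] (P : Measure Ω) [IsProbabilityMeasure P]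
    (X : ℕ → Ω → ℝ)
    (hXmeas : ∀ i, Measurable (X i))
    (hident : ∀ i, 1 ≤ i → Measure.map (X i) P = Measure.map (X 1) P)
    (α : ℝ) (hα : 0 < α)
    (htailpos : ∀ x : ℝ, 0 < x → 0 < P {ω | X 1 ω > x})
    (hrv : ∀ t : ℝ, 0 < t →
      Tendsto (fun x : ℝ => (P {ω | X 1 ω > t * x}).toReal / (P {ω | X 1 ω > x}).toReal)
        atTop (nhds (t ^ (-α))))
    (a : ℕ → ℝ) (hapos : ∀ n, 0 < a n)
    (ha : Tendsto (fun n : ℕ => (n : ℝ) * (P {ω | X 1 ω > a n}).toReal) atTop (nhds 1)) :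
    ∀ s : ℝ, α < s → ∀ ε : ℝ, 0 < ε → ∀ δ : ℝ, 0 < δ →
      Filter.limsup
        (fun n : ℕ => (P {ω | ((Finset.Icc 1 n).fold max 0
            (fun i => if X i ω < ε * a n then X i ω else 0)) / a n > δ}).toReal) atTop
        ≤ δ ^ (-s) * (α / (s - α)) * ε ^ (s - α) := by
  intro s hs ε hε δ hδ
  have ha_top : Tendsto a atTop atTop := tendsto_atTop_of_tendsto_natCast_mul
    (fun x y hxy => ENNReal.toReal_mono (measure_ne_top _ _)
      (measure_mono fun ω (h : y < X 1 ω) => hxy.trans_lt h))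
    (fun x hx => ENNReal.toReal_pos (htailpos x hx).ne' (measure_ne_top _ _)) ha
  have hunion (n : ℕ) :=
    measureReal_fold_max_ite_div_gt_le hXmeas hident n (ε := ε) (hapos n) hδ.le
  have hcobdd : IsCoboundedUnder (· ≤ ·) atTop fun n : ℕ => (P {ω | (Finset.Icc 1 n).fold max 0
      (fun i => if X i ω < ε * a n then X i ω else 0) / a n > δ}).toReal :=
    isCoboundedUnder_le_of_le atTop fun _ => ENNReal.toReal_nonneg
  rcases le_total ε δ with hεδ | hδε
  · refine (limsup_le_of_le hcobdd (Eventually.of_forall fun n => ?_)).trans (by positivity)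
    have hempty : Ioo (δ * a n) (ε * a n) = ∅ :=
      Ioo_eq_empty_of_le (mul_le_mul_of_nonneg_right hεδ (hapos n).le)
    exact (hunion n).trans_eq (by rw [hempty, preimage_empty, measureReal_empty, mul_zero])
  have htail (c : ℝ) (hc : 0 < c) :=
    tendsto_natCast_mul_comp_const_mul (F := fun x => (P {ω | X 1 ω > x}).toReal) (hrv c hc)
      ha_top ha
  have hlim := (htail δ hδ).sub (htail ε hε)
  have hle (n : ℕ) : n * P.real (X 1 ⁻¹' Ioo (δ * a n) (ε * a n)) ≤
      n * (P {ω | X 1 ω > δ * a n}).toReal - n * (P {ω | X 1 ω > ε * a n}).toReal := by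
    rw [← mul_sub]
    exact mul_le_mul_of_nonneg_left (measureReal_preimage_Ioo_le_sub (hXmeas 1)
      (mul_le_mul_of_nonneg_right hδε (hapos n).le)) n.cast_nonneg
  calc _ ≤ _ := limsup_le_limsup (Eventually.of_forall fun n => (hunion n).trans (hle n)) hcobdd
          hlim.isBoundedUnder_le
    _ = δ ^ (-α) - ε ^ (-α) := hlim.limsup_eq
    _ ≤ _ := rpow_neg_sub_rpow_neg_le hα hs hδ hε

/-- **A limsup bound for maxima of truncated regularly varying variables.**
If `(X_n)` are identically distributed nonnegative random variables with a regularly varying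
tail of index `α > 0`, and `n P(X_1 > a_n) → 1`, then for every `s > α`, `ε > 0`, `δ > 0`,
`limsup_n P(a_n⁻¹ max_{1≤i≤n} X_i 1{X_i < ε a_n} > δ) ≤ δ^{-s} (α/(s-α)) ε^{s-α}`. -/
theorem limsup_max_truncated_bound
    {Ω : Type*} [MeasurableSpace Ω] (P : Measure Ω) [IsProbabilityMeasure P]
    (X : ℕ → Ω → ℝ)
    (hXmeas : ∀ i, Measurable (X i)) (hXnonneg : ∀ i ω, 0 ≤ X i ω)
    (hident : ∀ i, 1 ≤ i → Measure.map (X i) P = Measure.map (X 1) P)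
    (α : ℝ) (hα : 0 < α)
    (htailpos : ∀ x : ℝ, 0 < x → 0 < P {ω | X 1 ω > x})
    (hrv : ∀ t : ℝ, 0 < t →
      Tendsto (fun x : ℝ => (P {ω | X 1 ω > t * x}).toReal / (P {ω | X 1 ω > x}).toReal)
        atTop (nhds (t ^ (-α))))
    (a : ℕ → ℝ) (hapos : ∀ n, 0 < a n)
    (ha : Tendsto (fun n : ℕ => (n : ℝ) * (P {ω | X 1 ω > a n}).toReal) atTop (nhds 1)) :
    ∀ s : ℝ, α < s → ∀ ε : ℝ, 0 < ε → ∀ δ : ℝ, 0 < δ →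
      Filter.limsup
        (fun n : ℕ => (P {ω | ((Finset.Icc 1 n).fold max 0
            (fun i => if X i ω < ε * a n then X i ω else 0)) / a n > δ}).toReal) atTop
        ≤ δ ^ (-s) * (α / (s - α)) * ε ^ (s - α) :=
  limsup_max_truncated_bound_general P X hXmeas hident α hα htailpos hrv a hapos ha
end

section
/- Let (Z_n)_{n∈ℤ} be i.i.d. unit Fréchet random variables, let m ∈ ℕ, let c_0, …, c_m ≥ 0 with Σ_{i=0}^m c_i = 1 and c_0, c_m > 0, and define the moving maxima sequence X_n = max_{0≤i≤m} c_i Z_{n−i} for n ∈ ℤ. Let (a_n) be positive reals with n·P(Z_1 > a_n) → 1, let (r_n) be positive integers with r_n → ∞ and r_n/n → 0, let u > 0 and let s be an integer with s > m. Then the event {max_{s≤|i|≤r_n} X_i > u a_n} is independent of the event {X_0 > u a_n}, and lim_{n→∞} P(max_{s≤|i|≤r_n} X_i > u a_n | X_0 > u a_n) = 0. -/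
open MeasureTheory Filter ProbabilityTheory

/-- The finite order moving maxima process `X_n = max_{0 ≤ i ≤ m} c_i Z_{n-i}`. -/
noncomputable def movingMaxima {Ω : Type*} (Z : ℤ → Ω → ℝ) (c : ℕ → ℝ) (m : ℕ)
    (n : ℤ) (ω : Ω) : ℝ :=
  (Finset.range (m + 1)).sup' (Finset.nonempty_range_iff.mpr m.succ_ne_zero)
    (fun i => c i * Z (n - i) ω)

/-- The event `{max_{s ≤ |i| ≤ r_n} X_i > u a_n}` for the moving maxima sequence. -/
noncomputable def mmFarMaxEvent {Ω : Type*} (Z : ℤ → Ω → ℝ) (c : ℕ → ℝ) (m : ℕ)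
    (a : ℕ → ℝ) (r : ℕ → ℕ) (u : ℝ) (s : ℕ) (n : ℕ) : Set Ω :=
  {ω | ((Finset.Icc (-(r n : ℤ)) (r n)).filter (fun i => (s : ℤ) ≤ |i|)).fold max 0
      (fun i => movingMaxima Z c m i ω) > u * a n}

/-! Since `s > m`, every `X_i` with `|i| ≥ s` is a function of the `Z_j` with `j ∉ [-m, 0]`, while
`X_0` is a function of `Z_{-m}, …, Z_0`; hence the two events are independent and the conditional
probability is just `P(max_{s ≤ |i| ≤ r_n} X_i > u a_n)`. As the weights lie in `[0, 1]`, a union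
bound over the at most `(2 r_n + 1)(m + 1)` variables `Z_j` involved, with `P(Z_j > x) ≤ 1 / x`,
bounds it by `(m + 1)(2 r_n + 1) / (u a_n)`. Finally `n (1 - e^{-1/a_n}) → 1` forces `n / a_n → 1`,
so the bound is `O(r_n / n) → 0`. -/

open scoped Topology

section FrechetTail

variable {Ω : Type*} [MeasurableSpace Ω] {P : Measure Ω} [IsProbabilityMeasure P] {W : Ω → ℝ}

lemma measureReal_lt_eq_one_sub_exp (hW : Measurable W)
    (hF : ∀ x : ℝ, 0 < x → (P {ω | W ω ≤ x}).toReal = Real.exp (-(1 / x))) {x : ℝ}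
    (hx : 0 < x) : P.real {ω | x < W ω} = 1 - Real.exp (-(1 / x)) := by
  have hcompl : {ω | x < W ω} = {ω | W ω ≤ x}ᶜ := by ext; simp
  rw [hcompl, probReal_compl_eq_one_sub (measurableSet_le hW measurable_const), measureReal_def,
    hF x hx]

lemma measureReal_lt_le_one_div (hW : Measurable W)
    (hF : ∀ x : ℝ, 0 < x → (P {ω | W ω ≤ x}).toReal = Real.exp (-(1 / x))) {x : ℝ}
    (hx : 0 < x) : P.real {ω | x < W ω} ≤ 1 / x := by
  rw [measureReal_lt_eq_one_sub_exp hW hF hx]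
  linarith [Real.one_sub_le_exp_neg (1 / x)]

end FrechetTail

lemma tendsto_natCast_mul_of_tendsto_natCast_mul_one_sub_exp_neg {y : ℕ → ℝ}
    (h : Tendsto (fun n : ℕ => n * (1 - Real.exp (-y n))) atTop (𝓝 1)) :
    Tendsto (fun n : ℕ => n * y n) atTop (𝓝 1) := by
  have hq : Tendsto (fun n : ℕ => 1 - Real.exp (-y n)) atTop (𝓝 0) := by
    have := h.mul tendsto_one_div_atTop_nhds_zero_nat
    rw [one_mul] at this
    refine this.congr' ?_
    filter_upwards [eventually_ne_atTop 0] with n hn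
    field_simp
  have hexp : Tendsto (fun n => Real.exp (-y n)) atTop (𝓝 1) := by
    simpa using (tendsto_const_nhds (x := (1 : ℝ))).sub hq
  have hupper :
      Tendsto (fun n : ℕ => n * (1 - Real.exp (-y n)) / Real.exp (-y n)) atTop (𝓝 1) := by
    have := h.div hexp one_ne_zero
    rwa [div_one] at this
  refine tendsto_of_tendsto_of_tendsto_of_le_of_le h hupper (fun n => ?_) (fun n => ?_)
  · exact mul_le_mul_of_nonneg_left (by linarith [Real.one_sub_le_exp_neg (y n)]) n.cast_nonneg
  · -- `y ≤ exp y - 1 = (1 - exp (-y)) / exp (-y)`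
    have hy : y n * Real.exp (-y n) ≤ 1 - Real.exp (-y n) := by
      have := mul_le_mul_of_nonneg_right (Real.add_one_le_exp (y n)) (Real.exp_pos (-y n)).le
      rw [← Real.exp_add, add_neg_cancel, Real.exp_zero] at this
      linarith
    rw [le_div_iff₀ (Real.exp_pos _), mul_assoc]
    exact mul_le_mul_of_nonneg_left hy n.cast_nonneg

lemma measurable_fold_max {Ω ι : Type*} {_ : MeasurableSpace Ω} (F : Finset ι) (b : ℝ)
    {f : ι → Ω → ℝ} (hf : ∀ i ∈ F, Measurable (f i)) :
    Measurable fun ω => F.fold max b fun i => f i ω := by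
  classical
  induction F using Finset.induction_on with
  | empty => exact measurable_const
  | insert i F hi ih =>
    simp only [Finset.fold_insert hi]
    exact (hf i (F.mem_insert_self i)).max (ih fun j hj => hf j (Finset.mem_insert_of_mem hj))

lemma measureReal_lt_fold_max_le {Ω ι : Type*} [MeasurableSpace Ω] (P : Measure Ω)
    [IsFiniteMeasure P] (F : Finset ι) (f : ι → Ω → ℝ) {b x : ℝ} (hb : b ≤ x) :
    P.real {ω | x < F.fold max b fun i => f i ω} ≤ ∑ i ∈ F, P.real {ω | x < f i ω} := by
  refine (measureReal_mono (fun ω hω => ?_) (measure_ne_top _ _)).trans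
    (measureReal_biUnion_finset_le F _)
  rcases (Finset.lt_fold_max x).mp hω with hxb | ⟨i, hi, hxf⟩
  · exact absurd hxb hb.not_gt
  · exact Set.mem_biUnion hi hxf

lemma tendsto_mul_of_tendsto_div_natCast {b y : ℕ → ℝ} {L : ℝ}
    (hb : Tendsto (fun n : ℕ => b n / n) atTop (𝓝 0))
    (hy : Tendsto (fun n : ℕ => n * y n) atTop (𝓝 L)) :
    Tendsto (fun n : ℕ => b n * y n) atTop (𝓝 0) := by
  rw [← zero_mul L]
  refine (hb.mul hy).congr' ?_
  filter_upwards [eventually_ne_atTop 0] with n hn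
  field_simp

section MovingMaxima

variable {Ω : Type*} {Z : ℤ → Ω → ℝ} {c : ℕ → ℝ} {m : ℕ}

lemma measurable_movingMaxima_iSup_comap {S : Set ℤ} {i : ℤ} (hS : ∀ k ≤ m, i - k ∈ S) :
    Measurable[⨆ j ∈ S, MeasurableSpace.comap (Z j) inferInstance] (movingMaxima Z c m i) := by
  let : MeasurableSpace Ω := ⨆ j ∈ S, MeasurableSpace.comap (Z j) inferInstance
  exact Finset.measurable_range_sup'' (f := fun k ω => c k * Z (i - k) ω) fun k hk =>
    ((comap_measurable (Z (i - k))).mono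
      (le_iSup₂ (f := fun j (_ : j ∈ S) => MeasurableSpace.comap (Z j) inferInstance) _ (hS k hk))
      le_rfl).const_mul _

lemma movingMaxima_lt_subset (hc : ∀ k ≤ m, 0 ≤ c k)
    (hcsum : ∑ k ∈ Finset.range (m + 1), c k = 1) (i : ℤ) {x : ℝ} (hx : 0 < x) :
    {ω | x < movingMaxima Z c m i ω} ⊆ ⋃ k ∈ Finset.range (m + 1), {ω | x < Z (i - k) ω} := by
  intro ω hω
  obtain ⟨k, hk, hxk⟩ := (Finset.lt_sup'_iff _).mp (show x < movingMaxima Z c m i ω from hω)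
  have hkm : k ≤ m := Nat.lt_succ_iff.mp (Finset.mem_range.mp hk)
  have hck : c k ≤ 1 := hcsum ▸ Finset.single_le_sum
    (fun j hj => hc j (Nat.lt_succ_iff.mp (Finset.mem_range.mp hj))) hk
  refine Set.mem_biUnion hk (show x < Z (i - k) ω from ?_)
  by_contra! hZ
  nlinarith [hc k hkm]

variable [MeasurableSpace Ω] {P : Measure Ω}

theorem indepSet_lt_fold_max_movingMaxima (hZ : ∀ j, Measurable (Z j)) (hindep : iIndepFun Z P)
    {F : Finset ℤ} (hF : ∀ i ∈ F, (m : ℤ) < |i|) (b t t' : ℝ) :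
    IndepSet {ω | t < F.fold max b fun i => movingMaxima Z c m i ω}
      {ω | t' < movingMaxima Z c m 0 ω} P := by
  have hdisj : Disjoint (Set.Icc (-(m : ℤ)) 0)ᶜ (Set.Icc (-(m : ℤ)) 0) := disjoint_compl_left
  refine (indep_iSup_of_disjoint (fun j => (hZ j).comap_le) hindep.iIndep
    hdisj).indepSet_of_measurableSet ?_ ?_
  · refine measurable_fold_max F b (fun i hi => measurable_movingMaxima_iSup_comap fun k hk => ?_)
      measurableSet_Ioi
    have := hF i hi
    simp only [Set.mem_compl_iff, Set.mem_Icc, lt_abs] at this ⊢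
    omega
  · refine measurable_movingMaxima_iSup_comap (fun k hk => ?_) measurableSet_Ioi
    simp only [Set.mem_Icc]
    omega

variable [IsProbabilityMeasure P]

lemma measureReal_lt_movingMaxima_le (hZ : ∀ j, Measurable (Z j))
    (hF : ∀ j, ∀ x : ℝ, 0 < x → (P {ω | Z j ω ≤ x}).toReal = Real.exp (-(1 / x)))
    (hc : ∀ k ≤ m, 0 ≤ c k) (hcsum : ∑ k ∈ Finset.range (m + 1), c k = 1) (i : ℤ) {x : ℝ}
    (hx : 0 < x) : P.real {ω | x < movingMaxima Z c m i ω} ≤ (m + 1) / x :=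
  calc P.real {ω | x < movingMaxima Z c m i ω}
      ≤ ∑ k ∈ Finset.range (m + 1), P.real {ω | x < Z (i - k) ω} :=
        (measureReal_mono (movingMaxima_lt_subset hc hcsum i hx) (measure_ne_top _ _)).trans
          (measureReal_biUnion_finset_le _ _)
    _ ≤ ∑ _k ∈ Finset.range (m + 1), 1 / x :=
        Finset.sum_le_sum fun k _ => measureReal_lt_le_one_div (hZ _) (hF _) hx
    _ = (m + 1) / x := by rw [Finset.sum_const, Finset.card_range, nsmul_eq_mul]; push_cast; ring

lemma measureReal_lt_fold_max_movingMaxima_le (hZ : ∀ j, Measurable (Z j))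
    (hF : ∀ j, ∀ x : ℝ, 0 < x → (P {ω | Z j ω ≤ x}).toReal = Real.exp (-(1 / x)))
    (hc : ∀ k ≤ m, 0 ≤ c k) (hcsum : ∑ k ∈ Finset.range (m + 1), c k = 1) (F : Finset ℤ)
    {x : ℝ} (hx : 0 < x) :
    P.real {ω | x < F.fold max 0 fun i => movingMaxima Z c m i ω} ≤ F.card * (m + 1) / x :=
  calc P.real {ω | x < F.fold max 0 fun i => movingMaxima Z c m i ω}
      ≤ ∑ i ∈ F, P.real {ω | x < movingMaxima Z c m i ω} := measureReal_lt_fold_max_le P F _ hx.le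
    _ ≤ ∑ _i ∈ F, (m + 1) / x :=
        Finset.sum_le_sum fun i _ => measureReal_lt_movingMaxima_le hZ hF hc hcsum i hx
    _ = F.card * (m + 1) / x := by simp [mul_div_assoc]

lemma measureReal_mmFarMaxEvent_le (hZ : ∀ j, Measurable (Z j))
    (hF : ∀ j, ∀ x : ℝ, 0 < x → (P {ω | Z j ω ≤ x}).toReal = Real.exp (-(1 / x)))
    (hc : ∀ k ≤ m, 0 ≤ c k) (hcsum : ∑ k ∈ Finset.range (m + 1), c k = 1)
    {a : ℕ → ℝ} (r : ℕ → ℕ) {u : ℝ} (hua : ∀ n, 0 < u * a n) (s n : ℕ) :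
    P.real (mmFarMaxEvent Z c m a r u s n) ≤ (m + 1) / u * ((2 * r n + 1) * (1 / a n)) := by
  have hcard : (((Finset.Icc (-(r n : ℤ)) (r n)).filter fun i => (s : ℤ) ≤ |i|).card : ℝ)
      ≤ 2 * r n + 1 := by
    have := (Finset.card_filter_le (Finset.Icc (-(r n : ℤ)) (r n)) fun i => (s : ℤ) ≤ |i|)
    rw [Int.card_Icc] at this
    exact_mod_cast this.trans (by omega)
  refine (measureReal_lt_fold_max_movingMaxima_le hZ hF hc hcsum _ (hua n)).trans ?_
  rw [show (m + 1) / u * ((2 * r n + 1) * (1 / a n)) = (2 * r n + 1) * (m + 1) / (u * a n) by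
    field_simp]
  gcongr
  exact (hua n).le

end MovingMaxima

theorem moving_maxima_anticlustering_general
    {Ω : Type*} [MeasurableSpace Ω] (P : Measure Ω) [IsProbabilityMeasure P]
    (Z : ℤ → Ω → ℝ) (hZmeas : ∀ i, Measurable (Z i))
    (hindep : iIndepFun Z P)
    (hfrechet : ∀ i : ℤ,
      (∀ x : ℝ, 0 < x → (P {ω | Z i ω ≤ x}).toReal = Real.exp (-(1 / x))) ∧
      (∀ x : ℝ, x ≤ 0 → P {ω | Z i ω ≤ x} = 0))
    (m : ℕ) (c : ℕ → ℝ) (hc : ∀ i ≤ m, 0 ≤ c i)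
    (hcsum : ∑ i ∈ Finset.range (m + 1), c i = 1)
    (a : ℕ → ℝ) (hapos : ∀ n, 0 < a n)
    (ha : Tendsto (fun n : ℕ => (n : ℝ) * (P {ω | Z 1 ω > a n}).toReal) atTop (nhds 1))
    (r : ℕ → ℕ)
    (hrn : Tendsto (fun n : ℕ => (r n : ℝ) / n) atTop (nhds 0))
    (u : ℝ) (hu : 0 < u) (s : ℕ) (hsm : m < s) :
    (∀ n : ℕ,
      P (mmFarMaxEvent Z c m a r u s n ∩ {ω | movingMaxima Z c m 0 ω > u * a n})
        = P (mmFarMaxEvent Z c m a r u s n) * P {ω | movingMaxima Z c m 0 ω > u * a n}) ∧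
    Tendsto
      (fun n : ℕ =>
        (P (mmFarMaxEvent Z c m a r u s n ∩ {ω | movingMaxima Z c m 0 ω > u * a n})).toReal
          / (P {ω | movingMaxima Z c m 0 ω > u * a n}).toReal)
      atTop (nhds 0) := by
  have hfar : ∀ n, IndepSet (mmFarMaxEvent Z c m a r u s n)
      {ω | movingMaxima Z c m 0 ω > u * a n} P := fun n =>
    indepSet_lt_fold_max_movingMaxima hZmeas hindep (fun i hi => by
      simp only [Finset.mem_filter] at hi; omega) _ _ _
  refine ⟨fun n => (hfar n).measure_inter_eq_mul, ?_⟩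
  have hna : Tendsto (fun n : ℕ => n * (1 / a n)) atTop (𝓝 1) :=
    tendsto_natCast_mul_of_tendsto_natCast_mul_one_sub_exp_neg <| ha.congr fun n => by
      rw [← measureReal_lt_eq_one_sub_exp (hZmeas 1) (hfrechet 1).1 (hapos n)]; rfl
  have hr_div : Tendsto (fun n : ℕ => (2 * r n + 1 : ℝ) / n) atTop (𝓝 0) := by
    simpa [add_div, mul_div_assoc] using (hrn.const_mul 2).add tendsto_one_div_atTop_nhds_zero_nat
  have hbound := (tendsto_mul_of_tendsto_div_natCast hr_div hna).const_mul ((m + 1) / u)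
  rw [mul_zero] at hbound
  refine squeeze_zero (fun n => by positivity) (fun n => ?_) hbound
  -- `x * y / y ≤ x` holds also for `y = P {X_0 > u a_n} = 0`, since `x * 0 / 0 = 0`
  rw [(hfar n).measure_inter_eq_mul, ENNReal.toReal_mul]
  exact (div_le_of_le_mul₀ ENNReal.toReal_nonneg ENNReal.toReal_nonneg le_rfl).trans
    (measureReal_mmFarMaxEvent_le hZmeas (fun j => (hfrechet j).1) hc hcsum r
      (fun n => mul_pos hu (hapos n)) s n)

/-- **Anticlustering for finite order moving maxima.** For the moving maxima sequence built
from i.i.d. unit Fréchet variables, with `s > m`, the event `{max_{s ≤ |i| ≤ r_n} X_i > u a_n}`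
is independent of `{X_0 > u a_n}`, and
`P(max_{s ≤ |i| ≤ r_n} X_i > u a_n | X_0 > u a_n) → 0` as `n → ∞`. -/
theorem moving_maxima_anticlustering
    {Ω : Type*} [MeasurableSpace Ω] (P : Measure Ω) [IsProbabilityMeasure P]
    (Z : ℤ → Ω → ℝ) (hZmeas : ∀ i, Measurable (Z i))
    (hindep : iIndepFun Z P)
    (hfrechet : ∀ i : ℤ,
      (∀ x : ℝ, 0 < x → (P {ω | Z i ω ≤ x}).toReal = Real.exp (-(1 / x))) ∧
      (∀ x : ℝ, x ≤ 0 → P {ω | Z i ω ≤ x} = 0))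
    (m : ℕ) (c : ℕ → ℝ) (hc : ∀ i ≤ m, 0 ≤ c i)
    (hcsum : ∑ i ∈ Finset.range (m + 1), c i = 1)
    (hc0 : 0 < c 0) (hcm : 0 < c m)
    (a : ℕ → ℝ) (hapos : ∀ n, 0 < a n)
    (ha : Tendsto (fun n : ℕ => (n : ℝ) * (P {ω | Z 1 ω > a n}).toReal) atTop (nhds 1))
    (r : ℕ → ℕ) (hrpos : ∀ n, 0 < r n) (hrtop : Tendsto r atTop atTop)
    (hrn : Tendsto (fun n : ℕ => (r n : ℝ) / n) atTop (nhds 0))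
    (u : ℝ) (hu : 0 < u) (s : ℕ) (hsm : m < s) :
    (∀ n : ℕ,
      P (mmFarMaxEvent Z c m a r u s n ∩ {ω | movingMaxima Z c m 0 ω > u * a n})
        = P (mmFarMaxEvent Z c m a r u s n) * P {ω | movingMaxima Z c m 0 ω > u * a n}) ∧
    Tendsto
      (fun n : ℕ =>
        (P (mmFarMaxEvent Z c m a r u s n ∩ {ω | movingMaxima Z c m 0 ω > u * a n})).toReal
          / (P {ω | movingMaxima Z c m 0 ω > u * a n}).toReal)
      atTop (nhds 0) :=
  moving_maxima_anticlustering_general P Z hZmeas hindep hfrechet m c hc hcsum a hapos ha r hrn u hu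
    s hsm
end

section
/- Let c_1 > c_0 > 0 and set λ = c_0/(2c_1). Let a > 0, ε > 0, n ≥ 2, and let z_0, z_1, …, z_n be nonnegative reals. Define x_j = max(c_0 z_j, c_1 z_{j−1}) for j = 1, …, n and S_k = max_{1≤j≤k} x_j for k = 1, …, n, with S_0 = 0. Suppose i' ∈ {1, …, n−1} satisfies z_{i'} > ε a and z_j ≤ λ ε a for every j ∈ {0, 1, …, i'+1} with j ≠ i'. Then S_{i'} − S_{i'−1} ≥ (c_0 ε a)/2 and S_{i'+1} − S_{i'} ≥ (c_1 − c_0) ε a. -/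
/-!
Every `z j` with `j < i'` is at most `L = c₀ ε a / (2 c₁)`, so the running maximum before `i'`
is at most `c₁ L = c₀ ε a / 2`. The same bound controls `c₁ z (i' - 1)`, hence `x i' = c₀ z i'`
exceeds everything before it and `S i' = c₀ z i' > c₀ ε a`, giving the first jump. At the next
step `x (i' + 1) ≥ c₁ z i'`, so the second jump is at least `(c₁ - c₀) z i' ≥ (c₁ - c₀) ε a`.
-/

open Finset

def runMax {α : Type*} [LinearOrder α] [Zero α] (x : ℕ → α) (k : ℕ) : α :=
  (Icc 1 k).fold max 0 x

def movMax (c₀ c₁ : ℝ) (z : ℕ → ℝ) (j : ℕ) : ℝ :=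
  max (c₀ * z j) (c₁ * z (j - 1))

section runMax

variable {α : Type*} [LinearOrder α] [Zero α] (x : ℕ → α)

theorem runMax_succ (k : ℕ) : runMax x (k + 1) = max (x (k + 1)) (runMax x k) := by
  rw [runMax, ← insert_Icc_right_eq_Icc_add_one (by omega), fold_insert (by simp)]
  rfl

theorem runMax_le {k : ℕ} {B : α} (hB : 0 ≤ B) (h : ∀ j ∈ Icc 1 k, x j ≤ B) : runMax x k ≤ B :=
  (fold_max_le B).2 ⟨hB, h⟩

theorem le_runMax {j k : ℕ} (hj : 1 ≤ j) (hjk : j ≤ k) : x j ≤ runMax x k :=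
  (le_fold_max _).2 (Or.inr ⟨j, mem_Icc.2 ⟨hj, hjk⟩, le_rfl⟩)

end runMax

section movMax

variable {c₀ c₁ : ℝ} {z : ℕ → ℝ}

theorem movMax_le {L : ℝ} {j : ℕ} (hc₀ : 0 ≤ c₀) (hc : c₀ ≤ c₁) (hL : 0 ≤ L)
    (hj : z j ≤ L) (hj' : z (j - 1) ≤ L) : movMax c₀ c₁ z j ≤ c₁ * L :=
  max_le ((mul_le_mul_of_nonneg_left hj hc₀).trans (mul_le_mul_of_nonneg_right hc hL))
    (mul_le_mul_of_nonneg_left hj' (hc₀.trans hc))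

theorem runMax_movMax_le {L : ℝ} {k : ℕ} (hc₀ : 0 ≤ c₀) (hc : c₀ ≤ c₁) (hL : 0 ≤ L)
    (hz : ∀ j ≤ k, z j ≤ L) : runMax (movMax c₀ c₁ z) k ≤ c₁ * L :=
  runMax_le _ (mul_nonneg (hc₀.trans hc) hL) fun j hj ↦ by
    have hjk := (mem_Icc.1 hj).2
    exact movMax_le hc₀ hc hL (hz j hjk) (hz (j - 1) (by omega))

theorem runMax_movMax_eq_of_peak {L : ℝ} {i : ℕ} (hc₀ : 0 ≤ c₀) (hc : c₀ ≤ c₁) (hL : 0 ≤ L)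
    (hi : 1 ≤ i) (hz : ∀ j < i, z j ≤ L) (hpeak : c₁ * L ≤ c₀ * z i) :
    runMax (movMax c₀ c₁ z) i = c₀ * z i := by
  obtain ⟨k, rfl⟩ : ∃ k, i = k + 1 := ⟨i - 1, by omega⟩
  have hprev : runMax (movMax c₀ c₁ z) k ≤ c₁ * L :=
    runMax_movMax_le hc₀ hc hL fun j hj ↦ hz j (by omega)
  have hx : movMax c₀ c₁ z (k + 1) = c₀ * z (k + 1) :=
    max_eq_left ((mul_le_mul_of_nonneg_left (hz k (by omega)) (hc₀.trans hc)).trans hpeak)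
  rw [runMax_succ, hx, max_eq_left (hprev.trans hpeak)]

end movMax

theorem two_jump_estimate_general
    (c₀ c₁ : ℝ) (hc₀ : 0 < c₀) (hc : c₀ < c₁)
    (a ε : ℝ) (ha : 0 < a) (hε : 0 < ε)
    (z : ℕ → ℝ)
    (i' : ℕ) (hi'1 : 1 ≤ i')
    (hbig : z i' > ε * a)
    (hsmall : ∀ j ≤ i' + 1, j ≠ i' → z j ≤ (c₀ / (2 * c₁)) * ε * a) :
    ((Finset.Icc 1 i').fold max 0 (fun j => max (c₀ * z j) (c₁ * z (j - 1))))
        - ((Finset.Icc 1 (i' - 1)).fold max 0 (fun j => max (c₀ * z j) (c₁ * z (j - 1))))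
      ≥ c₀ * ε * a / 2 ∧
    ((Finset.Icc 1 (i' + 1)).fold max 0 (fun j => max (c₀ * z j) (c₁ * z (j - 1))))
        - ((Finset.Icc 1 i').fold max 0 (fun j => max (c₀ * z j) (c₁ * z (j - 1))))
      ≥ (c₁ - c₀) * ε * a := by
  change runMax (movMax c₀ c₁ z) i' - runMax (movMax c₀ c₁ z) (i' - 1) ≥ _ ∧
    runMax (movMax c₀ c₁ z) (i' + 1) - runMax (movMax c₀ c₁ z) i' ≥ _
  have hc₁ : 0 < c₁ := hc₀.trans hc
  set L := c₀ / (2 * c₁) * ε * a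
  have hL : 0 ≤ L := by positivity
  have hc₁L : c₁ * L = c₀ * ε * a / 2 := by simp only [L]; field_simp
  have hεa : 0 < c₀ * (ε * a) := by positivity
  have hbig₀ : c₀ * (ε * a) < c₀ * z i' := mul_lt_mul_of_pos_left hbig hc₀
  have hprev : runMax (movMax c₀ c₁ z) (i' - 1) ≤ c₁ * L :=
    runMax_movMax_le hc₀.le hc.le hL fun j hj ↦ hsmall j (by omega) (by omega)
  have hpeak : runMax (movMax c₀ c₁ z) i' = c₀ * z i' :=
    runMax_movMax_eq_of_peak hc₀.le hc.le hL hi'1 (fun j hj ↦ hsmall j (by omega) (by omega))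
      (by linarith)
  have hnext : c₁ * z i' ≤ runMax (movMax c₀ c₁ z) (i' + 1) :=
    (le_max_right (c₀ * z (i' + 1)) _).trans (le_runMax (movMax c₀ c₁ z) (by omega) le_rfl)
  have hgap : (c₁ - c₀) * (ε * a) ≤ (c₁ - c₀) * z i' :=
    mul_le_mul_of_nonneg_left hbig.le (by linarith)
  constructor <;> linarith

/-- **Deterministic two-jump estimate for the moving maxima recursion.**
With `c_1 > c_0 > 0`, `λ = c_0/(2c_1)`, `x_j = max(c_0 z_j, c_1 z_{j-1})` and
`S_k = max_{1≤j≤k} x_j` (with `S_0 = 0`), if `z_{i'} > ε a` and `z_j ≤ λ ε a` for all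
`j ≤ i'+1`, `j ≠ i'`, then the running maximum has two consecutive large jumps at `i'`:
`S_{i'} - S_{i'-1} ≥ c_0 ε a / 2` and `S_{i'+1} - S_{i'} ≥ (c_1 - c_0) ε a`. -/
theorem two_jump_estimate
    (c₀ c₁ : ℝ) (hc₀ : 0 < c₀) (hc : c₀ < c₁)
    (a ε : ℝ) (ha : 0 < a) (hε : 0 < ε)
    (n : ℕ) (hn : 2 ≤ n)
    (z : ℕ → ℝ) (hz : ∀ j ≤ n, 0 ≤ z j)
    (i' : ℕ) (hi'1 : 1 ≤ i') (hi'2 : i' ≤ n - 1)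
    (hbig : z i' > ε * a)
    (hsmall : ∀ j ≤ i' + 1, j ≠ i' → z j ≤ (c₀ / (2 * c₁)) * ε * a) :
    ((Finset.Icc 1 i').fold max 0 (fun j => max (c₀ * z j) (c₁ * z (j - 1))))
        - ((Finset.Icc 1 (i' - 1)).fold max 0 (fun j => max (c₀ * z j) (c₁ * z (j - 1))))
      ≥ c₀ * ε * a / 2 ∧
    ((Finset.Icc 1 (i' + 1)).fold max 0 (fun j => max (c₀ * z j) (c₁ * z (j - 1))))
        - ((Finset.Icc 1 i').fold max 0 (fun j => max (c₀ * z j) (c₁ * z (j - 1))))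
      ≥ (c₁ - c₀) * ε * a :=
  two_jump_estimate_general c₀ c₁ hc₀ hc a ε ha hε z i' hi'1 hbig hsmall
end

section
/- Let (Z_n)_{n∈ℤ} be i.i.d. unit Fréchet random variables, let c_1 > c_0 > 0 with c_0 + c_1 = 1, define X_n = max(c_0 Z_n, c_1 Z_{n−1}) for n ∈ ℤ, and let (a_n) be positive reals with n·P(Z_1 > a_n) → 1. For k ≥ 1 let S_k = max_{1≤j≤k} X_j and S_0 = 0. Then there exists ε > 0 such that liminf_{n→∞} P(∃ i ∈ {1, …, n−1} : S_i − S_{i−1} ≥ (c_0 ε/2) a_n and S_{i+1} − S_i ≥ (c_1 − c_0) ε a_n) > 0. -/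
open MeasureTheory Filter ProbabilityTheory

/-- The running maximum `S_k = max_{1≤j≤k} X_j` (with `S_0 = 0`) of the moving maxima
sequence `X_j = max(c₀ Z_j, c₁ Z_{j-1})`. -/
noncomputable def runningMax {Ω : Type*} (Z : ℤ → Ω → ℝ) (c₀ c₁ : ℝ) (k : ℕ) (ω : Ω) : ℝ :=
  (Finset.Icc 1 k).fold max 0
    (fun j : ℕ => max (c₀ * Z (j : ℤ) ω) (c₁ * Z ((j : ℤ) - 1) ω))

/-!
Take `ε = 1` and `β = c₀ / (2 c₁)`. If `Z_0, …, Z_{m-1} ≤ β a_n < a_n < Z_m` for some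
`1 ≤ m ≤ n - 1`, then `S_{m-1} ≤ c₀ a_n / 2`, the maximum jumps to `S_m = c₀ Z_m` and then to
`S_{m+1} ≥ c₁ Z_m`, which gives both jumps. These events are disjoint for different `m`, and by
independence the `m`-th one has probability `F(β a_n)^m (1 - F(a_n))` with `F(x) = e^{-1/x}`.
Their union therefore has probability at least `(n-1) e^{-(n-1)/(β a_n)} (1 - e^{-1/a_n})`,
which tends to `e^{-1/β} > 0` because `n (1 - e^{-1/a_n}) → 1` forces `n / a_n → 1`.
-/

open Real Topology

section RunningMax

variable {Ω : Type*} {Z : ℤ → Ω → ℝ} {c₀ c₁ : ℝ} {ω : Ω}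

lemma runningMax_succ (k : ℕ) :
    runningMax Z c₀ c₁ (k + 1) ω =
      max (max (c₀ * Z (k + 1 : ℕ) ω) (c₁ * Z k ω)) (runningMax Z c₀ c₁ k ω) := by
  rw [runningMax, ← Finset.insert_Icc_right_eq_Icc_add_one (by omega),
    Finset.fold_insert (by simp), runningMax]
  push_cast
  rw [add_sub_cancel_right]

lemma runningMax_le_mul (hc₀ : 0 ≤ c₀) (hc : c₀ ≤ c₁) {y : ℝ} (hy : 0 ≤ y) :
    ∀ {k : ℕ}, (∀ j ≤ k, Z j ω ≤ y) → runningMax Z c₀ c₁ k ω ≤ c₁ * y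
  | 0, _ => by simpa [runningMax] using mul_nonneg (hc₀.trans hc) hy
  | k + 1, h => by
    have hc₁y : c₁ * Z k ω ≤ c₁ * y := mul_le_mul_of_nonneg_left (h k (by omega)) (hc₀.trans hc)
    have hc₀y : c₀ * Z (k + 1 : ℕ) ω ≤ c₁ * y :=
      (mul_le_mul_of_nonneg_left (h (k + 1) le_rfl) hc₀).trans (mul_le_mul_of_nonneg_right hc hy)
    rw [runningMax_succ]
    exact max_le (max_le hc₀y hc₁y) (runningMax_le_mul hc₀ hc hy fun j hj => h j (by omega))

lemma runningMax_jumps (hc₀ : 0 ≤ c₀) (hc : c₀ ≤ c₁) {x y : ℝ} (hy : 0 ≤ y)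
    (hyx : c₁ * y ≤ c₀ * x) {m : ℕ} (hm : 1 ≤ m) (hsmall : ∀ j < m, Z j ω ≤ y)
    (hbig : x < Z m ω) :
    c₀ * x - c₁ * y ≤ runningMax Z c₀ c₁ m ω - runningMax Z c₀ c₁ (m - 1) ω ∧
      (c₁ - c₀) * x ≤ runningMax Z c₀ c₁ (m + 1) ω - runningMax Z c₀ c₁ m ω := by
  obtain ⟨k, rfl⟩ : ∃ k, m = k + 1 := ⟨m - 1, by omega⟩
  have hprev : runningMax Z c₀ c₁ k ω ≤ c₁ * y :=
    runningMax_le_mul hc₀ hc hy fun j hj => hsmall j (by omega)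
  have hZk : c₁ * Z k ω ≤ c₁ * y := mul_le_mul_of_nonneg_left (hsmall k (by omega)) (hc₀.trans hc)
  have hZm : c₀ * x ≤ c₀ * Z (k + 1 : ℕ) ω := mul_le_mul_of_nonneg_left hbig.le hc₀
  have hrecord : runningMax Z c₀ c₁ (k + 1) ω = c₀ * Z (k + 1 : ℕ) ω := by
    rw [runningMax_succ, max_eq_left (le_max_of_le_left (by linarith)), max_eq_left (by linarith)]
  have hnext : c₁ * Z (k + 1 : ℕ) ω ≤ runningMax Z c₀ c₁ (k + 1 + 1) ω := by
    rw [runningMax_succ]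
    exact le_max_of_le_left (le_max_right _ _)
  rw [hrecord, Nat.add_sub_cancel]
  exact ⟨by linarith, by nlinarith⟩

end RunningMax

section FirstExceedance

variable {Ω : Type*} {Y : ℕ → Ω → ℝ} {x y : ℝ}

def firstExceedance (Y : ℕ → Ω → ℝ) (y x : ℝ) (m : ℕ) : Set Ω :=
  {ω | (∀ j < m, Y j ω ≤ y) ∧ x < Y m ω}

lemma firstExceedance_eq_biInter (m : ℕ) :
    firstExceedance Y y x m =
      ⋂ j ∈ Finset.range (m + 1), Y j ⁻¹' (if j < m then Set.Iic y else Set.Ioi x) := by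
  ext ω
  simp only [firstExceedance, Set.mem_ofPred_eq, Set.mem_iInter, Finset.mem_range]
  constructor
  · rintro ⟨hsmall, hbig⟩ j hj
    split_ifs with hjm
    · exact hsmall j hjm
    · rwa [show j = m by omega]
  · intro h
    exact ⟨fun j hj => by simpa [hj] using h j (by omega), by simpa using h m (by omega)⟩

lemma measurableSet_firstExceedance [MeasurableSpace Ω] (hY : ∀ j, Measurable (Y j)) (m : ℕ) :
    MeasurableSet (firstExceedance Y y x m) := by
  rw [firstExceedance_eq_biInter]
  exact .biInter (Set.to_countable _) fun j _ => hY j (by split_ifs <;> measurability)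

lemma pairwiseDisjoint_firstExceedance (hyx : y ≤ x) (s : Set ℕ) :
    s.PairwiseDisjoint (firstExceedance Y y x) := by
  refine fun m₁ _ m₂ _ hne => Set.disjoint_left.2 fun ω h₁ h₂ => ?_
  rcases hne.lt_or_gt with hlt | hlt
  · linarith [h₁.2, h₂.1 m₁ hlt]
  · linarith [h₂.2, h₁.1 m₂ hlt]

lemma measure_firstExceedance [MeasurableSpace Ω] {P : Measure Ω} (hindep : iIndepFun Y P) (m : ℕ) :
    P (firstExceedance Y y x m) =
      (∏ j ∈ Finset.range m, P {ω | Y j ω ≤ y}) * P {ω | x < Y m ω} := by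
  rw [firstExceedance_eq_biInter, hindep.meas_biInter fun j _ => ⟨_, by split_ifs <;>
    measurability, rfl⟩, Finset.prod_range_succ]
  simp only [lt_irrefl, if_false]
  congr 1
  exact Finset.prod_congr rfl fun j hj => by rw [if_pos (Finset.mem_range.1 hj)]; rfl

lemma le_measure_biUnion_firstExceedance [MeasurableSpace Ω] {P : Measure Ω}
    [IsProbabilityMeasure P] (hY : ∀ j, Measurable (Y j))
    (hindep : iIndepFun Y P) (hyx : y ≤ x) {p q : ℝ}
    (hq : ∀ j, (P {ω | Y j ω ≤ y}).toReal = q) (hp : ∀ j, (P {ω | x < Y j ω}).toReal = p)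
    (N : ℕ) :
    N * (q ^ N * p) ≤ (P (⋃ m ∈ Finset.Icc 1 N, firstExceedance Y y x m)).toReal := by
  have hq0 : 0 ≤ q := hq 0 ▸ ENNReal.toReal_nonneg
  have hq1 : q ≤ 1 := hq 0 ▸ measureReal_le_one
  have hp0 : 0 ≤ p := hp 0 ▸ ENNReal.toReal_nonneg
  have hterm (m : ℕ) : (P (firstExceedance Y y x m)).toReal = q ^ m * p := by
    simp [measure_firstExceedance hindep, ENNReal.toReal_prod, hq, hp]
  rw [measure_biUnion_finset (pairwiseDisjoint_firstExceedance hyx _)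
    fun m _ => measurableSet_firstExceedance hY m, ENNReal.toReal_sum fun m _ => measure_ne_top _ _]
  calc (N : ℝ) * (q ^ N * p) = ∑ m ∈ Finset.Icc 1 N, q ^ N * p := by simp
    _ ≤ ∑ m ∈ Finset.Icc 1 N, (P (firstExceedance Y y x m)).toReal :=
      Finset.sum_le_sum fun m hm => (hterm m).symm ▸ mul_le_mul_of_nonneg_right
        (pow_le_pow_of_le_one hq0 hq1 (Finset.mem_Icc.1 hm).2) hp0

lemma biUnion_firstExceedance_subset_runningMax_jumps {Z : ℤ → Ω → ℝ} {c₀ c₁ : ℝ}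
    (hc₀ : 0 < c₀) (hc : c₀ ≤ c₁) (hx : 0 ≤ x) (N : ℕ) :
    ⋃ m ∈ Finset.Icc 1 N, firstExceedance (fun j : ℕ => Z j) (c₀ / (2 * c₁) * x) x m ⊆
      {ω | ∃ i ∈ Finset.Icc 1 N,
        runningMax Z c₀ c₁ i ω - runningMax Z c₀ c₁ (i - 1) ω ≥ c₀ / 2 * x ∧
        runningMax Z c₀ c₁ (i + 1) ω - runningMax Z c₀ c₁ i ω ≥ (c₁ - c₀) * x} := by
  intro ω hω
  obtain ⟨m, hm, hsmall, hbig⟩ := Set.mem_iUnion₂.1 hω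
  have hc₁ : 0 < c₁ := hc₀.trans_le hc
  have hy : c₁ * (c₀ / (2 * c₁) * x) = c₀ / 2 * x := by field_simp
  obtain ⟨hjump, hnext⟩ := runningMax_jumps hc₀.le hc (by positivity)
    (by nlinarith) (Finset.mem_Icc.1 hm).1 hsmall hbig
  exact ⟨m, hm, by linarith, by linarith⟩

end FirstExceedance

section Asymptotics

/-- Squeeze `n u` between `n p` and `n p / (1 - p)`, where `p = 1 - e^{-u}`. -/
lemma tendsto_nat_mul_of_tendsto_nat_mul_one_sub_exp_neg {u : ℕ → ℝ}
    (h : Tendsto (fun n : ℕ => n * (1 - exp (-u n))) atTop (𝓝 1)) :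
    Tendsto (fun n : ℕ => n * u n) atTop (𝓝 1) := by
  have hp : Tendsto (fun n : ℕ => 1 - exp (-u n)) atTop (𝓝 0) := by
    refine (h.div_atTop tendsto_natCast_atTop_atTop).congr' ?_
    filter_upwards [eventually_ne_atTop 0] with n hn
    field_simp
  have hupper : Tendsto (fun n : ℕ => n * (1 - exp (-u n)) / exp (-u n)) atTop (𝓝 1) := by
    have := h.div (tendsto_const_nhds.sub hp) (by norm_num : (1 : ℝ) - 0 ≠ 0)
    rw [sub_zero, div_one] at this
    exact this.congr fun n => by rw [Pi.div_apply, sub_sub_cancel]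
  refine tendsto_of_tendsto_of_tendsto_of_le_of_le h hupper (fun n => ?_) (fun n => ?_)
  · exact mul_le_mul_of_nonneg_left (by linarith [one_sub_le_exp_neg (u n)]) n.cast_nonneg
  · have hexp := mul_le_mul_of_nonneg_right (add_one_le_exp (u n)) (exp_pos (-u n)).le
    rw [← exp_add, add_neg_cancel, exp_zero] at hexp
    rw [mul_div_assoc]
    exact mul_le_mul_of_nonneg_left ((le_div_iff₀ (exp_pos _)).2 (by linarith)) n.cast_nonneg

lemma tendsto_pred_mul_of_tendsto_nat_mul {v : ℕ → ℝ}
    (h : Tendsto (fun n : ℕ => n * v n) atTop (𝓝 1)) :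
    Tendsto (fun n : ℕ => ((n - 1 : ℕ) : ℝ) * v n) atTop (𝓝 1) := by
  have hv : Tendsto v atTop (𝓝 0) := by
    refine (h.div_atTop tendsto_natCast_atTop_atTop).congr' ?_
    filter_upwards [eventually_ne_atTop 0] with n hn
    field_simp
  refine (sub_zero (1 : ℝ) ▸ h.sub hv).congr' ?_
  filter_upwards [eventually_ge_atTop 1] with n hn
  push_cast [Nat.cast_sub hn]
  ring

lemma tendsto_pred_mul_exp_pow_mul_one_sub_exp {u : ℕ → ℝ} (c : ℝ)
    (h : Tendsto (fun n : ℕ => n * (1 - exp (-u n))) atTop (𝓝 1)) :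
    Tendsto (fun n : ℕ => ((n - 1 : ℕ) : ℝ) * (exp (-(u n * c)) ^ (n - 1) * (1 - exp (-u n))))
      atTop (𝓝 (exp (-c))) := by
  have hpow : Tendsto (fun n : ℕ => exp (-(u n * c)) ^ (n - 1)) atTop (𝓝 (exp (-c))) := by
    have := (continuous_exp.tendsto _).comp
      ((tendsto_pred_mul_of_tendsto_nat_mul
        (tendsto_nat_mul_of_tendsto_nat_mul_one_sub_exp_neg h)).mul_const c).neg
    refine (one_mul c ▸ this).congr fun n => ?_
    rw [Function.comp_apply, ← exp_nat_mul]
    ring_nf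
  have := (tendsto_pred_mul_of_tendsto_nat_mul h).mul hpow
  rw [one_mul] at this
  exact this.congr fun n => by ring

end Asymptotics

theorem two_jump_positive_probability_general
    {Ω : Type*} [MeasurableSpace Ω] (P : Measure Ω) [IsProbabilityMeasure P]
    (Z : ℤ → Ω → ℝ) (hZmeas : ∀ i, Measurable (Z i))
    (hindep : iIndepFun Z P)
    (hfrechet : ∀ i : ℤ,
      (∀ x : ℝ, 0 < x → (P {ω | Z i ω ≤ x}).toReal = Real.exp (-(1 / x))) ∧
      (∀ x : ℝ, x ≤ 0 → P {ω | Z i ω ≤ x} = 0))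
    (c₀ c₁ : ℝ) (hc₀ : 0 < c₀) (hc : c₀ < c₁)
    (a : ℕ → ℝ) (hapos : ∀ n, 0 < a n)
    (ha : Tendsto (fun n : ℕ => (n : ℝ) * (P {ω | Z 1 ω > a n}).toReal) atTop (nhds 1)) :
    ∃ ε : ℝ, 0 < ε ∧
      0 < Filter.liminf
        (fun n : ℕ =>
          (P {ω | ∃ i ∈ Finset.Icc 1 (n - 1),
            runningMax Z c₀ c₁ i ω - runningMax Z c₀ c₁ (i - 1) ω ≥ (c₀ * ε / 2) * a n ∧
            runningMax Z c₀ c₁ (i + 1) ω - runningMax Z c₀ c₁ i ω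
              ≥ (c₁ - c₀) * ε * a n}).toReal)
        atTop := by
  set β := c₀ / (2 * c₁)
  have hβ : 0 < β := div_pos hc₀ (by linarith)
  have hβ1 : β ≤ 1 := by simp only [β]; rw [div_le_one (by linarith)]; linarith
  have htail (j : ℤ) {x : ℝ} (hx : 0 < x) : (P {ω | x < Z j ω}).toReal = 1 - exp (-(1 / x)) := by
    rw [← (hfrechet j).1 x hx, ← measureReal_def, ← measureReal_def,
      ← probReal_compl_eq_one_sub (measurableSet_le (hZmeas j) measurable_const)]
    simp only [Set.compl_ofPred, not_le]
  have hlim := tendsto_pred_mul_exp_pow_mul_one_sub_exp (u := fun n => 1 / a n) (1 / β)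
    (ha.congr fun n => congrArg _ (htail 1 (hapos n)))
  refine ⟨1, one_pos, (exp_pos (-(1 / β))).trans_le ?_⟩
  rw [← hlim.liminf_eq]
  refine liminf_le_liminf (.of_forall fun n => ?_) hlim.isBoundedUnder_ge
    (isBoundedUnder_of ⟨1, fun n => measureReal_le_one⟩).isCoboundedUnder_ge
  refine (le_measure_biUnion_firstExceedance (fun j => hZmeas j)
    (hindep.precomp Nat.cast_injective) (mul_le_of_le_one_left (hapos n).le hβ1)
    (fun j => by rw [(hfrechet j).1 _ (mul_pos hβ (hapos n)), one_div_mul_one_div_rev])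
    (fun j => htail j (hapos n)) (n - 1)).trans
    (ENNReal.toReal_mono (measure_ne_top _ _) (measure_mono ?_))
  simpa only [mul_one] using
    biUnion_firstExceedance_subset_runningMax_jumps hc₀ hc.le (hapos n).le (n - 1)

/-- **Two large consecutive jumps of the running maximum occur with positive probability.**
For the moving maxima sequence `X_n = max(c₀ Z_n, c₁ Z_{n-1})` built from i.i.d. unit Fréchet
variables with `c₁ > c₀ > 0`, `c₀ + c₁ = 1`, and `n P(Z_1 > a_n) → 1`, there exists `ε > 0`
such that
`liminf_n P(∃ i ∈ {1,…,n-1} : S_i - S_{i-1} ≥ (c₀ ε/2) a_n ∧ S_{i+1} - S_i ≥ (c₁-c₀) ε a_n)`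
is strictly positive. -/
theorem two_jump_positive_probability
    {Ω : Type*} [MeasurableSpace Ω] (P : Measure Ω) [IsProbabilityMeasure P]
    (Z : ℤ → Ω → ℝ) (hZmeas : ∀ i, Measurable (Z i))
    (hindep : iIndepFun Z P)
    (hfrechet : ∀ i : ℤ,
      (∀ x : ℝ, 0 < x → (P {ω | Z i ω ≤ x}).toReal = Real.exp (-(1 / x))) ∧
      (∀ x : ℝ, x ≤ 0 → P {ω | Z i ω ≤ x} = 0))
    (c₀ c₁ : ℝ) (hc₀ : 0 < c₀) (hc : c₀ < c₁) (hsum : c₀ + c₁ = 1)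
    (a : ℕ → ℝ) (hapos : ∀ n, 0 < a n)
    (ha : Tendsto (fun n : ℕ => (n : ℝ) * (P {ω | Z 1 ω > a n}).toReal) atTop (nhds 1)) :
    ∃ ε : ℝ, 0 < ε ∧
      0 < Filter.liminf
        (fun n : ℕ =>
          (P {ω | ∃ i ∈ Finset.Icc 1 (n - 1),
            runningMax Z c₀ c₁ i ω - runningMax Z c₀ c₁ (i - 1) ω ≥ (c₀ * ε / 2) * a n ∧
            runningMax Z c₀ c₁ (i + 1) ω - runningMax Z c₀ c₁ i ω
              ≥ (c₁ - c₀) * ε * a n}).toReal)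
        atTop :=
  two_jump_positive_probability_general P Z hZmeas hindep hfrechet c₀ c₁ hc₀ hc a hapos ha
end

section
/- Let (Z_n)_{n∈ℤ} be i.i.d. unit Fréchet random variables, let c_1 > c_0 > 0 with c_0 + c_1 = 1, define X_n = max(c_0 Z_n, c_1 Z_{n−1}) for n ∈ ℤ, and let (a_n) be positive reals with n·P(Z_1 > a_n) → 1. Define the partial maxima process M_n : [0,1] → ℝ by M_n(t) = a_n^{-1}·max_{1≤i≤⌊nt⌋} X_i (with M_n(t) = 0 for t < 1/n). Then there exists ε > 0 such that lim_{δ→0+} limsup_{n→∞} P(ω'_δ(M_n) > ε) > 0; consequently (M_n) does not satisfy the J₁-tightness oscillation criterion. -/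
/-!
Take `ε = 1`. If a single `Z_i`, `1 ≤ i ≤ n - 1`, exceeds `s a_n` while every other `Z_j`,
`0 ≤ j ≤ n`, is at most `a_n`, then `M_n` jumps twice in a row: to `c₀ Z_i / a_n` at `i/n`, and on
to `c₁ Z_i / a_n` at `(i+1)/n`, because `X_{i+1} ≥ c₁ Z_i`. Since `c₀ < c₁`, for `s` large both
jumps exceed `1`, and they lie in a window of length `2/n ≤ δ`, so `ω'_δ(M_n) > 1`. These events
are disjoint, and by independence their union has probability
`(n - 1)(1 - e^{-1/(s a_n)}) e^{-n/a_n} → e^{-1}/s`, as `n (1 - e^{-1/a_n}) → 1` forces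
`n / a_n → 1`. So `limsup_n P(ω'_δ(M_n) > 1) ≥ e^{-1}/s` for every `δ > 0`, and this limsup is
monotone in `δ`, hence has a positive limit as `δ → 0+`.
-/

open MeasureTheory Filter ProbabilityTheory

noncomputable def oscJ1 (g : ℝ → ℝ) (δ : ℝ) : ℝ :=
  sSup {y : ℝ | ∃ t₁ t t₂ : ℝ, 0 ≤ t₁ ∧ t₁ ≤ t ∧ t ≤ t₂ ∧ t₂ ≤ 1 ∧ t₂ - t₁ ≤ δ ∧
    y = min |g t - g t₁| |g t₂ - g t|}

noncomputable def partialMaxProcess {Ω : Type*} (Z : ℤ → Ω → ℝ) (c₀ c₁ : ℝ) (a : ℕ → ℝ)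
    (n : ℕ) (ω : Ω) (t : ℝ) : ℝ :=
  ((Finset.Icc (1 : ℤ) ⌊(n : ℝ) * t⌋).fold max 0
    (fun i => max (c₀ * Z i ω) (c₁ * Z (i - 1) ω))) / a n

open Set Topology Asymptotics

section Oscillation

variable {g : ℝ → ℝ} {C δ : ℝ}

lemma min_le_oscJ1 (hg : ∀ t ∈ Icc (0 : ℝ) 1, |g t| ≤ C) {t₁ t t₂ : ℝ} (h₀ : 0 ≤ t₁)
    (h₁ : t₁ ≤ t) (h₂ : t ≤ t₂) (h₃ : t₂ ≤ 1) (hδ : t₂ - t₁ ≤ δ) :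
    min |g t - g t₁| |g t₂ - g t| ≤ oscJ1 g δ := by
  refine le_csSup ⟨C + C, ?_⟩ ⟨t₁, t, t₂, h₀, h₁, h₂, h₃, hδ, rfl⟩
  rintro _ ⟨s₁, s, s₂, h₀, h₁, h₂, h₃, -, rfl⟩
  calc min |g s - g s₁| |g s₂ - g s| ≤ |g s - g s₁| := min_le_left _ _
    _ ≤ |g s| + |g s₁| := abs_sub _ _
    _ ≤ C + C := add_le_add (hg s ⟨by linarith, by linarith⟩) (hg s₁ ⟨h₀, by linarith⟩)

lemma oscJ1_monotoneOn (hg : ∀ t ∈ Icc (0 : ℝ) 1, |g t| ≤ C) :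
    MonotoneOn (oscJ1 g) (Ici 0) := by
  intro δ hδ δ' _ hδδ'
  refine csSup_le ⟨0, 0, 0, 0, le_rfl, le_rfl, le_rfl, zero_le_one, by simpa using hδ, by simp⟩ ?_
  rintro _ ⟨t₁, t, t₂, h₀, h₁, h₂, h₃, h₄, rfl⟩
  exact min_le_oscJ1 hg h₀ h₁ h₂ h₃ (h₄.trans hδδ')

end Oscillation

section PartialMaxima

variable {Ω : Type*} (Z : ℤ → Ω → ℝ) (c₀ c₁ : ℝ) {a : ℕ → ℝ} (n : ℕ) (ω : Ω)

def movingMax (j : ℤ) : ℝ :=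
  max (c₀ * Z j ω) (c₁ * Z (j - 1) ω)

lemma partialMaxProcess_nonneg (ha : 0 ≤ a n) (t : ℝ) :
    0 ≤ partialMaxProcess Z c₀ c₁ a n ω t :=
  div_nonneg ((Finset.le_fold_max _).2 (Or.inl le_rfl)) ha

lemma partialMaxProcess_monotone (ha : 0 ≤ a n) :
    Monotone (partialMaxProcess Z c₀ c₁ a n ω) := by
  intro t t' htt'
  refine div_le_div_of_nonneg_right ((Finset.fold_max_le _).2 ⟨?_, fun j hj => ?_⟩) ha
  · exact (Finset.le_fold_max _).2 (Or.inl le_rfl)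
  · refine (Finset.le_fold_max _).2 (Or.inr ⟨j, ?_, le_rfl⟩)
    exact Finset.Icc_subset_Icc le_rfl (Int.floor_le_floor (by gcongr)) hj

lemma abs_partialMaxProcess_le (ha : 0 ≤ a n) {t : ℝ} (ht : t ∈ Icc (0 : ℝ) 1) :
    abs (partialMaxProcess Z c₀ c₁ a n ω t) ≤ partialMaxProcess Z c₀ c₁ a n ω 1 := by
  rw [abs_of_nonneg (partialMaxProcess_nonneg Z c₀ c₁ n ω ha t)]
  exact partialMaxProcess_monotone Z c₀ c₁ n ω ha ht.2

lemma partialMaxProcess_intCast_div (hn : n ≠ 0) (k : ℤ) :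
    partialMaxProcess Z c₀ c₁ a n ω (k / n) =
      (Finset.Icc 1 k).fold max 0 (movingMax Z c₀ c₁ ω) / a n := by
  rw [partialMaxProcess, mul_div_cancel₀ _ (Nat.cast_ne_zero.2 hn), Int.floor_intCast]
  rfl

end PartialMaxima

section PeakEvent

variable {Ω : Type*} {Z : ℤ → Ω → ℝ} {N i : ℤ} {u v : ℝ} {ω : Ω}

variable (Z) in
def peakEvent (N i : ℤ) (u v : ℝ) : Set Ω :=
  ⋂ j ∈ Finset.Icc 0 N, Z j ⁻¹' (if j = i then Ioi v else Iic u)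

lemma lt_of_mem_peakEvent (hω : ω ∈ peakEvent Z N i u v) (hi : i ∈ Finset.Icc 0 N) :
    v < Z i ω := by
  simpa using mem_iInter₂.1 hω i hi

lemma le_of_mem_peakEvent (hω : ω ∈ peakEvent Z N i u v) {j : ℤ} (hj : j ∈ Finset.Icc 0 N)
    (hji : j ≠ i) : Z j ω ≤ u := by
  simpa [hji] using mem_iInter₂.1 hω j hj

lemma foldMax_movingMax_bounds_of_mem_peakEvent {c₀ c₁ : ℝ} (hc₀ : 0 ≤ c₀) (hc : c₀ ≤ c₁)
    (hu : 0 ≤ u) (huv : c₁ * u ≤ c₀ * v) (hi : i ∈ Finset.Icc 1 (N - 1))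
    (hω : ω ∈ peakEvent Z N i u v) :
    (Finset.Icc 1 (i - 1)).fold max 0 (movingMax Z c₀ c₁ ω) ≤ c₁ * u ∧
      (Finset.Icc 1 i).fold max 0 (movingMax Z c₀ c₁ ω) = c₀ * Z i ω ∧
      c₁ * Z i ω ≤ (Finset.Icc 1 (i + 1)).fold max 0 (movingMax Z c₀ c₁ ω) := by
  rw [Finset.mem_Icc] at hi
  have hc₁ : 0 ≤ c₁ := hc₀.trans hc
  have hsmall : ∀ j, 0 ≤ j → j ≤ N → j ≠ i → Z j ω ≤ u := fun j h₀ h₁ hji =>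
    le_of_mem_peakEvent hω (Finset.mem_Icc.2 ⟨h₀, h₁⟩) hji
  have hbig : c₁ * u ≤ c₀ * Z i ω := huv.trans (mul_le_mul_of_nonneg_left
    (lt_of_mem_peakEvent hω (Finset.mem_Icc.2 ⟨by omega, by omega⟩)).le hc₀)
  have hbefore : ∀ j, 1 ≤ j → j < i → movingMax Z c₀ c₁ ω j ≤ c₁ * u := fun j h₀ h₁ => max_le
    ((mul_le_mul_of_nonneg_left (hsmall j (by omega) (by omega) (by omega)) hc₀).trans
      (mul_le_mul_of_nonneg_right hc hu))
    (mul_le_mul_of_nonneg_left (hsmall (j - 1) (by omega) (by omega) (by omega)) hc₁)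
  refine ⟨(Finset.fold_max_le _).2 ⟨mul_nonneg hc₁ hu, fun j hj => ?_⟩,
    le_antisymm ((Finset.fold_max_le _).2 ⟨(mul_nonneg hc₁ hu).trans hbig, fun j hj => ?_⟩) ?_,
    ?_⟩
  · rw [Finset.mem_Icc] at hj
    exact hbefore j hj.1 (by omega)
  · rw [Finset.mem_Icc] at hj
    rcases hj.2.lt_or_eq with hji | rfl
    · exact (hbefore j hj.1 hji).trans hbig
    · exact max_le le_rfl ((mul_le_mul_of_nonneg_left
        (hsmall (j - 1) (by omega) (by omega) (by omega)) hc₁).trans hbig)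
  · exact (Finset.le_fold_max _).2
      (Or.inr ⟨i, Finset.mem_Icc.2 ⟨hi.1, le_rfl⟩, le_max_left _ _⟩)
  · refine (Finset.le_fold_max _).2 (Or.inr ⟨i + 1, Finset.mem_Icc.2 ⟨by omega, le_rfl⟩, ?_⟩)
    simp [movingMax]

lemma one_lt_oscJ1_of_mem_peakEvent {c₀ c₁ s δ : ℝ} {a : ℕ → ℝ} {n : ℕ} (hc₀ : 0 < c₀)
    (hc : c₀ < c₁) (ha : 0 < a n) (hs₀ : 1 + c₁ ≤ c₀ * s) (hs₁ : 1 ≤ (c₁ - c₀) * s)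
    (hi : i ∈ Finset.Icc 1 ((n : ℤ) - 1)) (hω : ω ∈ peakEvent Z n i (a n) (s * a n))
    (hδ : 2 / n ≤ δ) :
    1 < oscJ1 (partialMaxProcess Z c₀ c₁ a n ω) δ := by
  have hi' := Finset.mem_Icc.1 hi
  have hn₀ : (0 : ℝ) < n := by exact_mod_cast (by omega : 0 < n)
  have hi₁ : (1 : ℝ) ≤ i := by exact_mod_cast hi'.1
  have hin : (i : ℝ) ≤ n - 1 := by exact_mod_cast hi'.2
  have hcs : c₁ * a n ≤ c₀ * (s * a n) := by
    rw [← mul_assoc]; exact mul_le_mul_of_nonneg_right (by linarith) ha.le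
  obtain ⟨h_before, h_at, h_after⟩ :=
    foldMax_movingMax_bounds_of_mem_peakEvent hc₀.le hc.le ha.le hcs hi hω
  have hw : s < Z i ω / a n :=
    (lt_div_iff₀ ha).2 (lt_of_mem_peakEvent hω (Finset.mem_Icc.2 ⟨by omega, by omega⟩))
  have hg₁ : partialMaxProcess Z c₀ c₁ a n ω ((i - 1) / n) ≤ c₁ := by
    have := partialMaxProcess_intCast_div Z c₀ c₁ (a := a) n ω (by omega) (i - 1)
    push_cast at this
    rw [this, div_le_iff₀ ha]; exact h_before
  have hg : partialMaxProcess Z c₀ c₁ a n ω (i / n) = c₀ * (Z i ω / a n) := by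
    rw [partialMaxProcess_intCast_div Z c₀ c₁ n ω (by omega), h_at, mul_div_assoc]
  have hg₂ : c₁ * (Z i ω / a n) ≤ partialMaxProcess Z c₀ c₁ a n ω ((i + 1) / n) := by
    have := partialMaxProcess_intCast_div Z c₀ c₁ (a := a) n ω (by omega) (i + 1)
    push_cast at this
    rw [this, ← mul_div_assoc]; exact div_le_div_of_nonneg_right h_after ha.le
  set g := partialMaxProcess Z c₀ c₁ a n ω
  have hjump₁ : 1 < g (i / n) - g ((i - 1) / n) := by
    linarith [mul_lt_mul_of_pos_left hw hc₀]
  have hjump₂ : 1 < g ((i + 1) / n) - g (i / n) := by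
    linarith [mul_lt_mul_of_pos_left hw (sub_pos.2 hc)]
  refine (lt_min (hjump₁.trans_le (le_abs_self _)) (hjump₂.trans_le (le_abs_self _))).trans_le
    (min_le_oscJ1 (fun t ht => abs_partialMaxProcess_le Z c₀ c₁ n ω ha.le ht) ?_ ?_ ?_ ?_ ?_)
  · exact div_nonneg (by linarith) hn₀.le
  · gcongr; linarith
  · gcongr; linarith
  · rw [div_le_one hn₀]; linarith
  · rw [← sub_div]; convert hδ using 2; ring

end PeakEvent

section PeakProbability

variable {Ω : Type*} [MeasurableSpace Ω] {P : Measure Ω} [IsProbabilityMeasure P]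
  {Z : ℤ → Ω → ℝ} {u v p q : ℝ} {N : ℕ}

lemma measurableSet_peakEvent (hZ : ∀ j, Measurable (Z j)) (N i : ℤ) (u v : ℝ) :
    MeasurableSet (peakEvent Z N i u v) :=
  .biInter (Finset.countable_toSet _) fun j _ => hZ j (by split_ifs <;> measurability)

lemma measureReal_peakEvent (hZ : ∀ j, Measurable (Z j)) (hindep : iIndepFun Z P) {i : ℤ}
    (hi : i ∈ Finset.Icc 0 (N : ℤ)) (hu : ∀ j, P.real {ω | Z j ω ≤ u} = p)
    (hv : P.real {ω | Z i ω ≤ v} = q) :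
    P.real (peakEvent Z N i u v) = (1 - q) * p ^ N := by
  have hcompl : Z i ⁻¹' Ioi v = {ω | Z i ω ≤ v}ᶜ := by ext; simp
  have hcard : ((Finset.Icc 0 (N : ℤ)).erase i).card = N := by
    rw [Finset.card_erase_of_mem hi, Int.card_Icc]; omega
  rw [measureReal_def, peakEvent, hindep.measure_inter_preimage_eq_mul _
      (fun j _ => by split_ifs <;> measurability), ENNReal.toReal_prod,
    ← Finset.mul_prod_erase _ _ hi, if_pos rfl, ← measureReal_def, hcompl,
    probReal_compl_eq_one_sub (s := {ω | Z i ω ≤ v}) (hZ i measurableSet_Iic), hv,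
    Finset.prod_congr rfl (g := fun _ => p), Finset.prod_const, hcard]
  intro j hj
  rw [if_neg (Finset.ne_of_mem_erase hj), ← measureReal_def]
  exact hu j

lemma measureReal_biUnion_peakEvent (hZ : ∀ j, Measurable (Z j)) (hindep : iIndepFun Z P)
    (hN : 1 ≤ N) (huv : u ≤ v) (hu : ∀ j, P.real {ω | Z j ω ≤ u} = p)
    (hv : ∀ j, P.real {ω | Z j ω ≤ v} = q) :
    P.real (⋃ i ∈ Finset.Icc 1 ((N : ℤ) - 1), peakEvent Z N i u v) =
      (N - 1) * ((1 - q) * p ^ N) := by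
  have hmem : ∀ i ∈ Finset.Icc 1 ((N : ℤ) - 1), i ∈ Finset.Icc 0 (N : ℤ) := fun i hi => by
    rw [Finset.mem_Icc] at hi ⊢; omega
  have hdisj : (Finset.Icc 1 ((N : ℤ) - 1) : Set ℤ).PairwiseDisjoint
      fun i => peakEvent Z N i u v := fun i hi i' _ hii' =>
    Set.disjoint_left.2 fun ω hω hω' =>
      (lt_of_mem_peakEvent hω (hmem i hi)).not_ge
        ((le_of_mem_peakEvent hω' (hmem i hi) hii').trans huv)
  rw [measureReal_biUnion_finset hdisj fun i _ => measurableSet_peakEvent hZ _ _ _ _,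
    Finset.sum_congr rfl fun i hi => measureReal_peakEvent hZ hindep (hmem i hi) hu (hv i),
    Finset.sum_const, Int.card_Icc, nsmul_eq_mul]
  congr 1
  push_cast [show ((N : ℤ) - 1 + 1 - 1).toNat = N - 1 by omega, Nat.cast_sub hN]
  ring

end PeakProbability

lemma isEquivalent_one_sub_exp_neg : (fun x : ℝ => 1 - Real.exp (-x)) ~[𝓝 0] id := by
  have h : HasDerivAt (fun x : ℝ => 1 - Real.exp (-x)) 1 0 := by
    simpa using ((Real.hasDerivAt_exp (-0)).comp 0 (hasDerivAt_neg 0)).const_sub 1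
  rw [hasDerivAt_iff_isLittleO_nhds_zero] at h
  simp only [zero_add, neg_zero, Real.exp_zero, sub_self, sub_zero, smul_eq_mul, mul_one] at h
  exact h

lemma Filter.Tendsto.tendsto_mul_one_sub_exp_neg_iff {α : Type*} {l : Filter α} {f x : α → ℝ}
    (hx : Tendsto x l (𝓝 0)) {c : ℝ} :
    Tendsto (fun n => f n * (1 - Real.exp (-x n))) l (𝓝 c) ↔
      Tendsto (fun n => f n * x n) l (𝓝 c) :=
  (IsEquivalent.refl.mul (isEquivalent_one_sub_exp_neg.comp_tendsto hx)).tendsto_nhds_iff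

lemma tendsto_zero_of_tendsto_natCast_mul {u : ℕ → ℝ} {c : ℝ}
    (hu : Tendsto (fun n : ℕ => (n : ℝ) * u n) atTop (𝓝 c)) : Tendsto u atTop (𝓝 0) := by
  refine (hu.div_atTop tendsto_natCast_atTop_atTop).congr' ?_
  filter_upwards [eventually_ne_atTop 0] with n hn
  field_simp

lemma tendsto_peakProbability {a : ℕ → ℝ} {s : ℝ}
    (ha : Tendsto (fun n : ℕ => (n : ℝ) * (1 - Real.exp (-(1 / a n)))) atTop (𝓝 1)) :
    Tendsto (fun n : ℕ => ((n : ℝ) - 1) *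
      ((1 - Real.exp (-(1 / (s * a n)))) * Real.exp (-(1 / a n)) ^ n)) atTop
      (𝓝 (Real.exp (-1) / s)) := by
  have hexp : Tendsto (fun n => Real.exp (-(1 / a n))) atTop (𝓝 1) := by
    simpa using (tendsto_zero_of_tendsto_natCast_mul ha).const_sub 1
  have hx : Tendsto (fun n => 1 / a n) atTop (𝓝 0) := by
    simpa using ((Real.continuousAt_log one_ne_zero).tendsto.comp hexp).neg
  have hnx : Tendsto (fun n : ℕ => (n : ℝ) * (1 / a n)) atTop (𝓝 1) :=
    hx.tendsto_mul_one_sub_exp_neg_iff.1 ha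
  have hxs : Tendsto (fun n => 1 / (s * a n)) atTop (𝓝 0) := by
    simpa [mul_comm, div_eq_mul_inv] using hx.div_const s
  have hnxs : Tendsto (fun n : ℕ => (n : ℝ) * (1 - Real.exp (-(1 / (s * a n))))) atTop
      (𝓝 (1 / s)) := by
    refine hxs.tendsto_mul_one_sub_exp_neg_iff.2 ?_
    simpa [mul_comm, div_eq_mul_inv, mul_assoc, mul_left_comm] using hnx.div_const s
  have hq : Tendsto (fun n => 1 - Real.exp (-(1 / (s * a n)))) atTop (𝓝 0) :=
    tendsto_zero_of_tendsto_natCast_mul hnxs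
  have hpow : Tendsto (fun n : ℕ => Real.exp (-(1 / a n)) ^ n) atTop (𝓝 (Real.exp (-1))) := by
    simp only [← Real.exp_nat_mul, mul_neg]
    exact (Real.continuous_exp.tendsto _).comp hnx.neg
  convert (hnxs.sub hq).mul hpow using 2 <;> ring

section Limsup

variable {Ω : Type*} [MeasurableSpace Ω] {P : Measure Ω} [IsProbabilityMeasure P]
  {s t : ℕ → Set Ω}

lemma limsup_measureReal_mono (h : ∀ n, s n ⊆ t n) :
    limsup (fun n => P.real (s n)) atTop ≤ limsup (fun n => P.real (t n)) atTop :=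
  limsup_le_limsup (.of_forall fun n => measureReal_mono (h n))
    (isCoboundedUnder_le_of_le atTop fun _ => measureReal_nonneg)
    (isBoundedUnder_of ⟨1, fun _ => measureReal_le_one⟩)

lemma le_limsup_measureReal {r : ℕ → ℝ} {c : ℝ} (hr : Tendsto r atTop (𝓝 c))
    (h : ∀ᶠ n in atTop, r n ≤ P.real (s n)) : c ≤ limsup (fun n => P.real (s n)) atTop :=
  hr.limsup_eq ▸ limsup_le_limsup h hr.isBoundedUnder_ge.isCoboundedUnder_le
    (isBoundedUnder_of ⟨1, fun _ => measureReal_le_one⟩)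

end Limsup

lemma MonotoneOn.exists_tendsto_nhdsGT_ge {f : ℝ → ℝ} {x c : ℝ} (hf : MonotoneOn f (Ioi x))
    (hc : ∀ y > x, c ≤ f y) : ∃ L, c ≤ L ∧ Tendsto f (𝓝[>] x) (𝓝 L) :=
  ⟨_, le_csInf (nonempty_Ioi.image f) (forall_mem_image.2 hc),
    hf.tendsto_nhdsGT ⟨c, forall_mem_image.2 hc⟩⟩

lemma exists_peak_threshold {c₀ c₁ : ℝ} (hc₀ : 0 < c₀) (hc : c₀ < c₁) :
    ∃ s, 1 ≤ s ∧ 1 + c₁ ≤ c₀ * s ∧ 1 ≤ (c₁ - c₀) * s :=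
  ((eventually_ge_atTop 1).and
    (((tendsto_id.const_mul_atTop hc₀).eventually_ge_atTop _).and
      ((tendsto_id.const_mul_atTop (sub_pos.2 hc)).eventually_ge_atTop _))).exists

lemma peakProbability_le_measureReal_oscJ1_gt_one {Ω : Type*} [MeasurableSpace Ω]
    {P : Measure Ω} [IsProbabilityMeasure P] {Z : ℤ → Ω → ℝ} (hZ : ∀ j, Measurable (Z j))
    (hindep : iIndepFun Z P)
    (hcdf : ∀ j x, 0 < x → P.real {ω | Z j ω ≤ x} = Real.exp (-(1 / x)))
    {c₀ c₁ s δ : ℝ} {a : ℕ → ℝ} {n : ℕ} (hc₀ : 0 < c₀) (hc : c₀ < c₁) (ha : 0 < a n)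
    (hs : 1 ≤ s) (hs₀ : 1 + c₁ ≤ c₀ * s) (hs₁ : 1 ≤ (c₁ - c₀) * s) (hn : 1 ≤ n)
    (hδ : 2 / n ≤ δ) :
    (n - 1) * ((1 - Real.exp (-(1 / (s * a n)))) * Real.exp (-(1 / a n)) ^ n) ≤
      P.real {ω | oscJ1 (partialMaxProcess Z c₀ c₁ a n ω) δ > 1} := by
  rw [← measureReal_biUnion_peakEvent hZ hindep hn (le_mul_of_one_le_left ha.le hs)
    (fun j => hcdf j _ ha) (fun j => hcdf j _ (by positivity))]
  refine measureReal_mono fun ω hω => ?_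
  obtain ⟨i, hi, hωi⟩ := mem_iUnion₂.1 hω
  exact one_lt_oscJ1_of_mem_peakEvent hc₀ hc ha hs₀ hs₁ hi hωi hδ

theorem J1_oscillation_criterion_fails_general
    {Ω : Type*} [MeasurableSpace Ω] (P : Measure Ω) [IsProbabilityMeasure P]
    (Z : ℤ → Ω → ℝ) (hZmeas : ∀ i, Measurable (Z i))
    (hindep : iIndepFun Z P)
    (hfrechet : ∀ i : ℤ,
      (∀ x : ℝ, 0 < x → (P {ω | Z i ω ≤ x}).toReal = Real.exp (-(1 / x))) ∧
      (∀ x : ℝ, x ≤ 0 → P {ω | Z i ω ≤ x} = 0))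
    (c₀ c₁ : ℝ) (hc₀ : 0 < c₀) (hc : c₀ < c₁)
    (a : ℕ → ℝ) (hapos : ∀ n, 0 < a n)
    (ha : Tendsto (fun n : ℕ => (n : ℝ) * (P {ω | Z 1 ω > a n}).toReal) atTop (nhds 1)) :
    ∃ ε : ℝ, 0 < ε ∧
      (∃ L : ℝ, 0 < L ∧
        Tendsto
          (fun δ : ℝ => Filter.limsup
            (fun n : ℕ =>
              (P {ω | oscJ1 (partialMaxProcess Z c₀ c₁ a n ω) δ > ε}).toReal) atTop)
          (nhdsWithin 0 (Set.Ioi 0)) (nhds L)) ∧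
      ¬ Tendsto
          (fun δ : ℝ => Filter.limsup
            (fun n : ℕ =>
              (P {ω | oscJ1 (partialMaxProcess Z c₀ c₁ a n ω) δ > ε}).toReal) atTop)
          (nhdsWithin 0 (Set.Ioi 0)) (nhds 0) := by
  obtain ⟨s, hs, hs₀, hs₁⟩ := exists_peak_threshold hc₀ hc
  have hcdf : ∀ j x, 0 < x → P.real {ω | Z j ω ≤ x} = Real.exp (-(1 / x)) :=
    fun j => (hfrechet j).1
  have htail : ∀ n, P.real {ω | Z 1 ω > a n} = 1 - Real.exp (-(1 / a n)) := fun n => by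
    rw [← hcdf 1 _ (hapos n),
      ← probReal_compl_eq_one_sub (s := {ω | Z 1 ω ≤ a n}) (hZmeas 1 measurableSet_Iic)]
    simp only [compl_ofPred, not_le, gt_iff_lt]
  have hmono : MonotoneOn (fun δ => limsup (fun n : ℕ =>
      P.real {ω | oscJ1 (partialMaxProcess Z c₀ c₁ a n ω) δ > 1}) atTop) (Ioi 0) :=
    fun δ hδ δ' hδ' hδδ' => limsup_measureReal_mono fun n ω hω => lt_of_lt_of_le hω <|
      oscJ1_monotoneOn (fun t ht => abs_partialMaxProcess_le Z c₀ c₁ n ω (hapos n).le ht)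
        (Ioi_subset_Ici_self hδ) (Ioi_subset_Ici_self hδ') hδδ'
  obtain ⟨L, hL, hlim⟩ := hmono.exists_tendsto_nhdsGT_ge fun δ hδ =>
    le_limsup_measureReal (tendsto_peakProbability (ha.congr fun n => by rw [← htail]; rfl)) <| by
      filter_upwards [eventually_ge_atTop 1,
        (tendsto_const_div_atTop_nhds_zero_nat 2).eventually_le_const hδ] with n hn hnδ
      exact peakProbability_le_measureReal_oscJ1_gt_one hZmeas hindep hcdf hc₀ hc (hapos n)
        hs hs₀ hs₁ hn hnδ
  have hL₀ : 0 < L := (div_pos (Real.exp_pos _) (by linarith)).trans_le hL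
  exact ⟨1, one_pos, ⟨L, hL₀, hlim⟩, fun h0 => hL₀.ne' (tendsto_nhds_unique hlim h0)⟩

/-- **Failure of the `J₁`-tightness oscillation criterion for the partial maxima processes of
moving maxima.** There is `ε > 0` with `lim_{δ→0+} limsup_n P(ω'_δ(M_n) > ε) > 0`; in
particular the `J₁` oscillation criterion `lim_{δ→0+} limsup_n P(ω'_δ(M_n) > ε) = 0` fails. -/
theorem J1_oscillation_criterion_fails
    {Ω : Type*} [MeasurableSpace Ω] (P : Measure Ω) [IsProbabilityMeasure P]
    (Z : ℤ → Ω → ℝ) (hZmeas : ∀ i, Measurable (Z i))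
    (hindep : iIndepFun Z P)
    (hfrechet : ∀ i : ℤ,
      (∀ x : ℝ, 0 < x → (P {ω | Z i ω ≤ x}).toReal = Real.exp (-(1 / x))) ∧
      (∀ x : ℝ, x ≤ 0 → P {ω | Z i ω ≤ x} = 0))
    (c₀ c₁ : ℝ) (hc₀ : 0 < c₀) (hc : c₀ < c₁) (hsum : c₀ + c₁ = 1)
    (a : ℕ → ℝ) (hapos : ∀ n, 0 < a n)
    (ha : Tendsto (fun n : ℕ => (n : ℝ) * (P {ω | Z 1 ω > a n}).toReal) atTop (nhds 1)) :
    ∃ ε : ℝ, 0 < ε ∧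
      (∃ L : ℝ, 0 < L ∧
        Tendsto
          (fun δ : ℝ => Filter.limsup
            (fun n : ℕ =>
              (P {ω | oscJ1 (partialMaxProcess Z c₀ c₁ a n ω) δ > ε}).toReal) atTop)
          (nhdsWithin 0 (Set.Ioi 0)) (nhds L)) ∧
      ¬ Tendsto
          (fun δ : ℝ => Filter.limsup
            (fun n : ℕ =>
              (P {ω | oscJ1 (partialMaxProcess Z c₀ c₁ a n ω) δ > ε}).toReal) atTop)
          (nhdsWithin 0 (Set.Ioi 0)) (nhds 0) :=
  J1_oscillation_criterion_fails_general P Z hZmeas hindep hfrechet c₀ c₁ hc₀ hc a hapos ha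
end
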